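/- arXiv:2001.11763 — 6 statements merged into one kernel-verified Lean document; each statement's English description precedes it below -/
import Mathlib

section
/- Let Σ and Δ be alphabets, let f be a substitution assigning to each letter of Σ a set of words over Δ (extended to words by f(a_1 a_2 ⋯ a_n) = {A_1 A_2 ⋯ A_n : A_i ∈ f(a_i) for all i}), and let u ∈ Σ* be a square-free word. Then every word in the set f(u) is square-free provided all of the following conditions hold: (I) for every factor v of u of length at most 3, every word in f(v) is square-free; (II) for all letters a, b, c ∈ Σ and all words A ∈ f(a), B ∈ f(b), C ∈ f(c): (i) if A is a factor of B, then a = b and A = B; (ii) if A B = p C s for some words p, s over Δ, then p is empty or s is empty; (iii) if A = A' A'', B = B' B'', and C = A' B'' for some words A', A'', B', B'', then c = a or c = b. -/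
/-- A word `w` is square-free if it contains no factor `x ++ x` with `x` nonempty. -/
def SquareFree {α : Type*} (w : List α) : Prop :=
  ∀ x : List α, x ≠ [] → ¬ (x ++ x) <:+: w

/-- `v` is an extension of `w`: insert a single letter anywhere in `w`. -/
def IsExtension {α : Type*} (w v : List α) : Prop :=
  ∃ (w' w'' : List α) (a : α), w = w' ++ w'' ∧ v = w' ++ [a] ++ w''

/-- `w` is extremal square-free. -/
def ExtremalSquareFree {α : Type*} (w : List α) : Prop :=
  SquareFree w ∧ ∀ v, IsExtension w v → ¬ SquareFree v

/-- Extension of a set-valued substitution from letters to words: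
`SubstSet f (a₁ ⋯ aₙ) = {A₁ ++ ⋯ ++ Aₙ : Aᵢ ∈ f aᵢ}`. -/
def SubstSet {α β : Type*} (f : α → Set (List β)) : List α → Set (List β)
  | [] => {[]}
  | a :: w => {W | ∃ A ∈ f a, ∃ B ∈ SubstSet f w, W = A ++ B}

/-!
Write a word of `f(u)` as `A₁ ⋯ Aₙ` with `Aᵢ ∈ f(aᵢ)` and suppose it contains a square `x x`.
Shrinking the factor of `u`, the square starts inside `A₁` and ends inside `Aₙ`, and by (I)
`n ≥ 4`. Conditions (i) and (ii) make the blocks synchronizing: an occurrence of a block starts at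
a block boundary, and two factorizations of a word that start together agree block by block. Up to
reversing all words, some block `B` other than `Aₙ` lies in the second `x`; its copy in the first
`x` starts at a block boundary, so both halves carry the same blocks, apart from those containing
the ends and the midpoint of the square. Condition (iii) identifies the letter of the middle block
with `a₁` or `aₙ`, and in every case `u` contains a square.
-/

theorem List.exists_eq_append_of_append_eq_append {α : Type*} {a b c d : List α}
    (h : a ++ b = c ++ d) (hle : a.length ≤ c.length) : ∃ m, c = a ++ m ∧ b = m ++ d := by
  obtain ⟨m, rfl⟩ := List.prefix_of_prefix_length_le (List.prefix_append a b)
    (h ▸ List.prefix_append c d) hle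
  exact ⟨m, rfl, List.append_cancel_left (h.trans (List.append_assoc a m d))⟩

theorem List.infix_of_append_eq_append_left {α : Type*} {A R P y S : List α}
    (h : A ++ R = P ++ y ++ S) (hle : A.length ≤ P.length) : y <:+: R := by
  obtain ⟨m, rfl, hR⟩ := List.exists_eq_append_of_append_eq_append
    (h.trans (List.append_assoc P y S)) hle
  exact ⟨m, S, by simp [hR]⟩

theorem List.infix_of_append_eq_append_right {α : Type*} {A R P y S : List α}
    (h : R ++ A = P ++ y ++ S) (hle : A.length ≤ S.length) : y <:+: R := by
  have hlen := congrArg List.length h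
  simp only [List.length_append] at hlen
  obtain ⟨m, rfl, -⟩ := List.exists_eq_append_of_append_eq_append h.symm (by simp; omega)
  exact ⟨P, m, by simp⟩

namespace SquareFree

variable {α : Type*} {v w : List α}

theorem nil : SquareFree ([] : List α) := fun _ hx h =>
  hx (List.append_eq_nil_iff.1 (List.infix_nil.1 h)).1

theorem of_infix (hw : SquareFree w) (h : v <:+: w) : SquareFree v :=
  fun x hx hxv => hw x hx (hxv.trans h)

theorem reverse (hw : SquareFree w) : SquareFree w.reverse := fun x hx h =>
  hw x.reverse (by simpa using hx) (by simpa using List.reverse_infix.2 h)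

end SquareFree

section Blocks

variable {α β : Type*} {f : α → Set (List β)}

/-- A word of `SubstSet f u` is represented by the list of its blocks, each paired with the letter
of `u` it is an image of. -/
def joinBlocks (L : List (α × List β)) : List β := (L.map Prod.snd).flatten

@[simp] theorem joinBlocks_nil : joinBlocks ([] : List (α × List β)) = [] := rfl

@[simp] theorem joinBlocks_cons (p : α × List β) (L : List (α × List β)) :
    joinBlocks (p :: L) = p.2 ++ joinBlocks L := rfl

@[simp] theorem joinBlocks_append (L M : List (α × List β)) :
    joinBlocks (L ++ M) = joinBlocks L ++ joinBlocks M := by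
  simp [joinBlocks]

theorem length_le_length_joinBlocks {p : α × List β} {L : List (α × List β)} (hp : p ∈ L) :
    p.2.length ≤ (joinBlocks L).length := by
  obtain ⟨s, t, rfl⟩ := List.append_of_mem hp
  simp only [joinBlocks_append, joinBlocks_cons, List.length_append]
  omega

theorem exists_of_mem_substSet : ∀ {u : List α} {W : List β}, W ∈ SubstSet f u →
    ∃ L : List (α × List β),
      L.map Prod.fst = u ∧ (∀ p ∈ L, p.2 ∈ f p.1) ∧ joinBlocks L = W
  | [], _, hW => ⟨[], rfl, by simp, hW.symm⟩
  | a :: _, _, ⟨A, hA, _, hB, hW⟩ => by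
    obtain ⟨L, rfl, hL, rfl⟩ := exists_of_mem_substSet hB
    exact ⟨(a, A) :: L, rfl, by simpa [hA] using hL, hW.symm⟩

theorem joinBlocks_mem_substSet : ∀ {L : List (α × List β)}, (∀ p ∈ L, p.2 ∈ f p.1) →
    joinBlocks L ∈ SubstSet f (L.map Prod.fst)
  | [], _ => rfl
  | p :: _, hL => ⟨p.2, hL p (by simp), _,
      joinBlocks_mem_substSet fun q hq => hL q (by simp [hq]), rfl⟩

theorem exists_split_of_joinBlocks_eq : ∀ {L : List (α × List β)} {Y Z : List β},
    joinBlocks L = Y ++ Z → Z ≠ [] →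
    ∃ LA t T₁ T₂ LB, L = LA ++ (t, T₁ ++ T₂) :: LB ∧ T₂ ≠ [] ∧
      Y = joinBlocks LA ++ T₁ ∧ Z = T₂ ++ joinBlocks LB
  | [], _, _, h, hZ => absurd (List.append_eq_nil_iff.1 h.symm).2 hZ
  | (a, A) :: L, Y, Z, h, hZ => by
    rw [joinBlocks_cons] at h
    rcases le_or_gt A.length Y.length with hle | hlt
    · obtain ⟨Y', rfl, h'⟩ := List.exists_eq_append_of_append_eq_append h hle
      obtain ⟨LA, t, T₁, T₂, LB, rfl, hT₂, rfl, rfl⟩ :=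
        exists_split_of_joinBlocks_eq h' hZ
      exact ⟨(a, A) :: LA, t, T₁, T₂, LB, rfl, hT₂, by simp, rfl⟩
    · obtain ⟨T₂, rfl, h'⟩ := List.exists_eq_append_of_append_eq_append h.symm hlt.le
      refine ⟨[], a, Y, T₂, L, rfl, ?_, by simp, h'⟩
      rintro rfl
      simp at hlt

def IsFactorization (f : α → Set (List β)) (L : List (α × List β)) : Prop :=
  ∀ p ∈ L, p.2 ∈ f p.1 ∧ p.2 ≠ []

theorem IsFactorization.subset {L M : List (α × List β)} (hL : IsFactorization f L)
    (h : M ⊆ L) : IsFactorization f M :=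
  fun p hp => hL p (h hp)

theorem IsFactorization.eq_nil_of_joinBlocks_eq_nil {L : List (α × List β)}
    (hL : IsFactorization f L) (h : joinBlocks L = []) : L = [] := by
  cases L with
  | nil => rfl
  | cons p L => exact absurd (List.append_eq_nil_iff.1 h).1 (hL p (by simp)).2

def reverseBlocks (L : List (α × List β)) : List (α × List β) :=
  L.reverse.map (Prod.map id List.reverse)

def reverseSubst (f : α → Set (List β)) (a : α) : Set (List β) := {A | A.reverse ∈ f a}

theorem joinBlocks_reverseBlocks (L : List (α × List β)) :
    joinBlocks (reverseBlocks L) = (joinBlocks L).reverse := by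
  induction L with
  | nil => rfl
  | cons p L ih => simp_all [reverseBlocks]

theorem map_fst_reverseBlocks (L : List (α × List β)) :
    (reverseBlocks L).map Prod.fst = (L.map Prod.fst).reverse := by
  simp [reverseBlocks, List.map_reverse]

theorem IsFactorization.reverse {L : List (α × List β)} (hL : IsFactorization f L) :
    IsFactorization (reverseSubst f) (reverseBlocks L) := by
  intro p hp
  obtain ⟨q, hq, rfl⟩ := List.mem_map.1 hp
  simpa [reverseSubst] using hL q (List.mem_reverse.1 hq)

end Blocks

section TightSquare

variable {α β : Type*}

structure IsTightSquare (K : List (α × List β)) (P x S : List β) : Prop where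
  ne_nil : x ≠ []
  eq : joinBlocks K = P ++ x ++ x ++ S
  head : ∀ p ∈ K.head?, P.length < p.2.length
  getLast : ∀ p ∈ K.getLast?, S.length < p.2.length

theorem IsTightSquare.reverse {K : List (α × List β)} {P x S : List β}
    (h : IsTightSquare K P x S) :
    IsTightSquare (reverseBlocks K) S.reverse x.reverse P.reverse where
  ne_nil := by simpa using h.ne_nil
  eq := by rw [joinBlocks_reverseBlocks, h.eq]; simp
  head p hp := by
    obtain ⟨q, hq, rfl⟩ : ∃ q ∈ K.getLast?, Prod.map id List.reverse q = p := by
      simpa [reverseBlocks] using hp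
    simpa using h.getLast q hq
  getLast p hp := by
    obtain ⟨q, hq, rfl⟩ : ∃ q ∈ K.head?, Prod.map id List.reverse q = p := by
      simpa [reverseBlocks] using hp
    simpa using h.head q hq

theorem length_lt_length_joinBlocks {S : List β} {K L : List (α × List β)}
    (hS : ∀ p ∈ K.getLast?, S.length < p.2.length) (hLK : L <:+ K) (hL : L ≠ []) :
    S.length < (joinBlocks L).length := by
  obtain ⟨L₀, rfl⟩ := hLK
  exact (hS _ (by simp [List.getLast?_append, List.getLast?_eq_some_getLast hL])).trans_le
    (length_le_length_joinBlocks (List.getLast_mem hL))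

end TightSquare

/-- Conditions (II)(i)–(iii) on the substitution `f`. -/
structure Synchronizing {α β : Type*} (f : α → Set (List β)) : Prop where
  eq_of_infix {a b : α} {A B : List β} : A ∈ f a → B ∈ f b → A <:+: B → a = b ∧ A = B
  eq_nil_or_eq_nil {a b c : α} {A B C p s : List β} : A ∈ f a → B ∈ f b → C ∈ f c →
    A ++ B = p ++ C ++ s → p = [] ∨ s = []
  eq_or_eq {a b c : α} {A B C A' A'' B' B'' : List β} : A ∈ f a → B ∈ f b → C ∈ f c →
    A = A' ++ A'' → B = B' ++ B'' → C = A' ++ B'' → c = a ∨ c = b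

namespace Synchronizing

variable {α β : Type*} {f : α → Set (List β)}

theorem reverse (hf : Synchronizing f) : Synchronizing (reverseSubst f) where
  eq_of_infix hA hB h := by
    obtain ⟨hab, hAB⟩ := hf.eq_of_infix hA hB (List.reverse_infix.2 h)
    exact ⟨hab, List.reverse_inj.1 hAB⟩
  eq_nil_or_eq_nil hA hB hC h := by
    refine (hf.eq_nil_or_eq_nil hB hA hC (p := _) (s := _) ?_).symm.imp
      List.reverse_eq_nil_iff.1 List.reverse_eq_nil_iff.1
    simpa using congrArg List.reverse h
  eq_or_eq := fun {_ _ _ _ _ _ A' A'' B' B''} hA hB hC hA' hB' hC' =>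
    (hf.eq_or_eq (A' := B''.reverse) (A'' := B'.reverse) (B' := A''.reverse) (B'' := A'.reverse)
      hB hA hC (by simp [hB']) (by simp [hA']) (by simp [hC'])).symm

theorem eq_and_eq_nil_of_append_eq {b t : α} {B T X Y : List β} (hf : Synchronizing f)
    (hB : B ∈ f b) (hT : T ∈ f t) (h : X ++ B ++ Y = T) : b = t ∧ X = [] ∧ Y = [] := by
  obtain ⟨hbt, rfl⟩ := hf.eq_of_infix hB hT ⟨X, Y, h⟩
  have hlen := congrArg List.length h
  simp only [List.length_append] at hlen
  exact ⟨hbt, List.eq_nil_of_length_eq_zero (by omega),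
    List.eq_nil_of_length_eq_zero (by omega)⟩

theorem eq_of_append_eq_append {a b : α} {A B X Y : List β} (hf : Synchronizing f)
    (hA : A ∈ f a) (hB : B ∈ f b) (h : A ++ X = B ++ Y) : a = b ∧ A = B := by
  rcases List.prefix_or_prefix_of_prefix (List.prefix_append A X)
    (h ▸ List.prefix_append B Y) with h' | h'
  · exact hf.eq_of_infix hA hB h'.isInfix
  · exact (hf.eq_of_infix hB hA h'.isInfix).imp Eq.symm Eq.symm

theorem exists_eq_append_cons_of_joinBlocks_eq {L : List (α × List β)} {c : α} {P C S : List β}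
    (hf : Synchronizing f) (hL : IsFactorization f L) (hC : C ∈ f c) (hC₀ : C ≠ [])
    (h : joinBlocks L = P ++ C ++ S) :
    ∃ L₁ c' L₂, L = L₁ ++ (c', C) :: L₂ ∧ joinBlocks L₁ = P := by
  obtain ⟨L₁, a, A₁, A₂, L₂, rfl, hA₂, rfl, hCS⟩ :=
    exists_split_of_joinBlocks_eq (h.trans (List.append_assoc _ _ _)) (by simp [hC₀])
  have hA : A₁ ++ A₂ ∈ f a := (hL (a, A₁ ++ A₂) (by simp)).1
  suffices hA₁ : A₁ = [] by
    subst hA₁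
    obtain ⟨-, rfl⟩ := hf.eq_of_append_eq_append hC (by simpa using hA) hCS
    exact ⟨L₁, a, L₂, by simp, by simp⟩
  by_contra hA₁
  rcases le_or_gt C.length A₂.length with hle | hlt
  · obtain ⟨m, rfl, -⟩ := List.exists_eq_append_of_append_eq_append hCS hle
    exact hA₁ (hf.eq_and_eq_nil_of_append_eq (X := A₁) (Y := m) hC hA (by simp)).2.1
  -- `C` starts inside the block `A₁ ++ A₂` and overhangs it into the next block `B`
  obtain ⟨C', rfl, hC'⟩ := List.exists_eq_append_of_append_eq_append hCS.symm hlt.le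
  obtain ⟨⟨b, B⟩, L₃, rfl⟩ : ∃ q L₃, L₂ = q :: L₃ := by
    rcases L₂ with _ | ⟨q, L₃⟩
    · obtain ⟨rfl, -⟩ := List.append_eq_nil_iff.1 (hC'.symm.trans joinBlocks_nil)
      simp at hlt
    · exact ⟨q, L₃, rfl⟩
  have hB : B ∈ f b := (hL (b, B) (by simp)).1
  simp only [joinBlocks_cons] at hC'
  rcases le_or_gt B.length C'.length with hle' | hlt'
  · obtain ⟨m, rfl, -⟩ := List.exists_eq_append_of_append_eq_append hC' hle'
    exact hA₂ (hf.eq_and_eq_nil_of_append_eq (X := A₂) (Y := m) hB hC (by simp)).2.1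
  · obtain ⟨D, rfl, -⟩ := List.exists_eq_append_of_append_eq_append hC'.symm hlt'.le
    have hD : D ≠ [] := by
      rintro rfl
      simp at hlt'
    exact (hf.eq_nil_or_eq_nil hA hB hC (by simp [List.append_assoc])).elim hA₁ hD

theorem exists_eq_append_of_joinBlocks_append_eq {a : α} {Y Y' : List β}
    (hf : Synchronizing f) (hY : Y ++ Y' ∈ f a) (hY' : Y' ≠ []) :
    ∀ {M N : List (α × List β)} {Z : List β}, IsFactorization f M → IsFactorization f N →
      joinBlocks M ++ Y = joinBlocks N ++ Z → ∃ M₂, M = N ++ M₂ ∧ joinBlocks M₂ ++ Y = Z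
  | M, [], _, _, _, h => ⟨M, rfl, by simpa using h⟩
  | [], (b, B) :: N, Z, _, hN, h => by
    simp only [joinBlocks_nil, List.nil_append, joinBlocks_cons, List.append_assoc] at h
    subst h
    obtain ⟨-, -, h⟩ := hf.eq_and_eq_nil_of_append_eq (X := []) (Y := joinBlocks N ++ Z ++ Y')
      (hN (b, B) (by simp)).1 hY (by simp)
    exact absurd (List.append_eq_nil_iff.1 h).2 hY'
  | (a', A) :: M, (b, B) :: N, Z, hM, hN, h => by
    simp only [joinBlocks_cons, List.append_assoc] at h
    obtain ⟨rfl, rfl⟩ := hf.eq_of_append_eq_append (hM (a', A) (by simp)).1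
      (hN (b, B) (by simp)).1 h
    obtain ⟨M₂, rfl, hM₂⟩ := exists_eq_append_of_joinBlocks_append_eq hf hY hY'
      (hM.subset (List.subset_cons_self _ _)) (hN.subset (List.subset_cons_self _ _))
      (by simpa using List.append_cancel_left h)
    exact ⟨M₂, rfl, hM₂⟩

theorem eq_append_of_joinBlocks_eq {L L₁ L₂ : List (α × List β)} {a b t : α}
    {A B P Y T : List β} (hf : Synchronizing f) (hL : IsFactorization f ((a, A) :: L))
    (hsplit : (a, A) :: L = L₁ ++ (b, B) :: L₂) (hP : P.length < A.length) (hT : T ∈ f t)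
    (hYT : Y <:+: T) (h : joinBlocks L₁ = P ++ Y) :
    (P = [] ∧ Y = [] ∧ A = B) ∨ A = P ++ Y := by
  rcases L₁ with _ | ⟨⟨a', A'⟩, L₁⟩
  · simp only [List.nil_append, List.cons.injEq, Prod.mk.injEq] at hsplit
    exact Or.inl ⟨(List.append_eq_nil_iff.1 h.symm).1, (List.append_eq_nil_iff.1 h.symm).2,
      hsplit.1.2⟩
  simp only [List.cons_append, List.cons.injEq, Prod.mk.injEq] at hsplit
  obtain ⟨⟨rfl, rfl⟩, rfl⟩ := hsplit
  rw [joinBlocks_cons] at h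
  obtain ⟨A', rfl, hY⟩ := List.exists_eq_append_of_append_eq_append h.symm hP.le
  rcases L₁ with _ | ⟨⟨d, D⟩, L₃⟩
  · exact Or.inr (by simp [hY])
  -- a second block before `B` would lie in the block `T`, after the nonempty `A'`
  obtain ⟨s, s', hsT⟩ := hYT
  obtain ⟨-, hA', -⟩ := hf.eq_and_eq_nil_of_append_eq (X := s ++ A')
    (Y := joinBlocks L₃ ++ s') (hL (d, D) (by simp)).1 hT (by simp [← hsT, hY])
  simp [(List.append_eq_nil_iff.1 hA').2] at hP

-- The midpoint of the square `x x` is a block boundary, and `x` starts with the first block `B`.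
theorem not_squareFree_of_boundary {K M N : List (α × List β)} {a t b : α} {B T S : List β}
    (hf : Synchronizing f) (hK : IsFactorization f K)
    (hS : ∀ p ∈ K.getLast?, S.length < p.2.length)
    (hsplit : K = (a, B) :: M ++ (t, T) :: (b, B) :: N)
    (h : joinBlocks M ++ T ++ S = joinBlocks N) : ¬ SquareFree (K.map Prod.fst) := by
  subst hsplit
  obtain ⟨hB, hB₀⟩ : B ∈ f b ∧ B ≠ [] := hK (b, B) (by simp)
  obtain ⟨rfl, -⟩ := hf.eq_of_infix (hK (a, B) (by simp)).1 hB List.infix_rfl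
  obtain ⟨N₂, rfl, hN₂⟩ := hf.exists_eq_append_of_joinBlocks_append_eq (Y := []) (Y' := B)
    (M := N) (N := M ++ [(t, T)]) (Z := S) hB hB₀ (hK.subset fun _ hp => by simp at hp ⊢; tauto)
    (hK.subset fun _ hp => by simp at hp ⊢; tauto) (by simpa using h.symm)
  obtain rfl : N₂ = [] := by
    by_contra hN₂₀
    have := length_lt_length_joinBlocks hS ⟨(a, B) :: M ++ (t, T) :: (a, B) :: (M ++ [(t, T)]),
      by simp⟩ hN₂₀
    simp [← hN₂] at this
  intro hu
  exact hu (a :: M.map Prod.fst ++ [t]) (by simp) ⟨[], [], by simp⟩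

-- The midpoint of the square `x x` splits the block `T₁ ++ T₂`, and `x` starts with `T₂`.
theorem not_squareFree_of_interior {K M N : List (α × List β)} {a t b : α}
    {P T₁ T₂ B S : List β} (hf : Synchronizing f) (hK : IsFactorization f K)
    (hS : ∀ p ∈ K.getLast?, S.length < p.2.length)
    (hsplit : K = (a, P ++ T₂) :: M ++ (t, T₁ ++ T₂) :: (b, B) :: N)
    (hN : N ≠ []) (hT₂ : T₂ ≠ []) (h : joinBlocks M ++ T₁ ++ S = B ++ joinBlocks N) :
    ¬ SquareFree (K.map Prod.fst) := by
  subst hsplit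
  intro hu
  obtain ⟨N, ⟨c, C⟩, rfl⟩ := (List.eq_nil_or_concat' N).resolve_left hN
  have hSC : S.length < C.length := hS (c, C) (List.getLast?_eq_some_iff.2
    ⟨(a, P ++ T₂) :: M ++ (t, T₁ ++ T₂) :: (b, B) :: N, by simp⟩)
  obtain ⟨C₁, hC₁, rfl⟩ := List.exists_eq_append_of_append_eq_append
    (a := B ++ joinBlocks N) (b := C) (c := joinBlocks M ++ T₁) (d := S) (by simpa using h.symm)
    (by have := congrArg List.length h; simp at this ⊢; omega)
  have hA : P ++ T₂ ∈ f a := (hK (a, P ++ T₂) (by simp)).1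
  have hT : T₁ ++ T₂ ∈ f t := (hK (t, T₁ ++ T₂) (by simp)).1
  have hC : C₁ ++ S ∈ f c := (hK (c, C₁ ++ S) (by simp)).1
  obtain ⟨M₂, rfl, hM₂⟩ := hf.exists_eq_append_of_joinBlocks_append_eq (M := M)
    (N := (b, B) :: N) hT hT₂ (hK.subset fun _ hp => by simp at hp ⊢; tauto)
    (hK.subset fun _ hp => by simp at hp ⊢; tauto) (by simpa using hC₁)
  rcases M₂ with _ | ⟨⟨d, D⟩, M₂⟩
  · obtain rfl : T₁ = C₁ := by simpa using hM₂
    rcases hf.eq_or_eq hC hA hT rfl rfl rfl with rfl | rfl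
    · exact hu (b :: N.map Prod.fst ++ [t]) (by simp) ⟨[a], [], by simp⟩
    · exact hu (t :: b :: N.map Prod.fst) (by simp) ⟨[], [c], by simp⟩
  · -- the block `D` begins the prefix `C₁` of the last block, so it is the last block
    obtain ⟨rfl, -, hrest⟩ := hf.eq_and_eq_nil_of_append_eq (X := [])
      (Y := joinBlocks M₂ ++ T₁ ++ S) (hK (d, D) (by simp)).1 hC (by simp [← hM₂])
    obtain ⟨hM₂₀, rfl, rfl⟩ : joinBlocks M₂ = [] ∧ T₁ = [] ∧ S = [] := by
      simpa using hrest
    obtain rfl : M₂ = [] :=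
      (hK.subset fun _ hp => by simp at hp ⊢; tauto).eq_nil_of_joinBlocks_eq_nil hM₂₀
    obtain ⟨rfl, -⟩ := hf.eq_of_infix hT hA ⟨P, [], by simp⟩
    exact hu (t :: b :: N.map Prod.fst ++ [d]) (by simp) ⟨[], [], by simp⟩

theorem not_isTightSquare_of_split {K LA LB : List (α × List β)} {t : α}
    {P x S T₁ T₂ : List β}
    (hf : Synchronizing f) (hK : IsFactorization f K) (hu : SquareFree (K.map Prod.fst))
    (hsplit : K = LA ++ (t, T₁ ++ T₂) :: LB) (hLB : 2 ≤ LB.length)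
    (h₁ : P ++ x = joinBlocks LA ++ T₁) (h₂ : x ++ S = T₂ ++ joinBlocks LB) :
    ¬ IsTightSquare K P x S := by
  intro hsq
  obtain ⟨b, B, N, rfl, hN⟩ : ∃ b B N, LB = (b, B) :: N ∧ N ≠ [] := by
    match LB, hLB with
    | (b, B) :: q :: N, _ => exact ⟨b, B, q :: N, rfl, List.cons_ne_nil _ _⟩
  subst hsplit
  obtain ⟨hB, hB₀⟩ : B ∈ f b ∧ B ≠ [] := hK (b, B) (by simp)
  have hT : T₁ ++ T₂ ∈ f t := (hK (t, T₁ ++ T₂) (by simp)).1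
  have hSN := length_lt_length_joinBlocks hsq.getLast
    ⟨LA ++ [(t, T₁ ++ T₂), (b, B)], by simp⟩ hN
  -- the block `B` lies inside the second half of the square ...
  obtain ⟨x', rfl, hx'⟩ : ∃ x', x = T₂ ++ B ++ x' ∧ x' ++ S = joinBlocks N := by
    have hlen := congrArg List.length h₂
    simp only [List.length_append, joinBlocks_cons] at hlen
    exact List.exists_eq_append_of_append_eq_append (a := T₂ ++ B) (b := joinBlocks N) (c := x)
      (d := S) (by simp [h₂]) (by simp; omega) |>.imp fun _ h => ⟨h.1, h.2.symm⟩
  obtain ⟨a, A, M, rfl⟩ : ∃ a A M, LA = (a, A) :: M := by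
    rcases LA with _ | ⟨⟨a, A⟩, M⟩
    · -- otherwise `B` is a factor of the first half, which lies inside the block `T₁ ++ T₂`
      obtain ⟨-, -, hx'T₂⟩ := hf.eq_and_eq_nil_of_append_eq (X := P ++ T₂) (Y := x' ++ T₂)
        hB hT (by simpa using congrArg (· ++ T₂) h₁)
      obtain rfl : x' = [] := (List.append_eq_nil_iff.1 hx'T₂).1
      simp [← hx'] at hSN
    · exact ⟨a, A, M, rfl⟩
  obtain ⟨L₁, b', L₂, hK', hL₁⟩ := hf.exists_eq_append_cons_of_joinBlocks_eq hK hB hB₀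
    (P := P ++ T₂) (S := x' ++ (T₂ ++ B ++ x') ++ S) (by rw [hsq.eq]; simp)
  rcases hf.eq_append_of_joinBlocks_eq hK hK' (hsq.head (a, A) rfl) hT ⟨T₁, [], by simp⟩ hL₁
    with ⟨rfl, rfl, rfl⟩ | rfl
  · obtain rfl : x' = joinBlocks M ++ T₁ := by simpa using h₁
    exact hf.not_squareFree_of_boundary (a := a) (t := t) (b := b) (B := A) (M := M) (N := N)
      (T := T₁) hK hsq.getLast (by simp) hx' hu
  · have hT₂ : T₂ ≠ [] := by
      rintro rfl
      simpa using hsq.head (a, P ++ []) rfl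
    have hM : joinBlocks M ++ T₁ = B ++ x' := by simpa using h₁.symm
    refine hf.not_squareFree_of_interior hK hsq.getLast rfl hN hT₂ ?_ hu
    rw [hM, ← hx']
    simp

theorem not_isTightSquare {K : List (α × List β)} {P x S : List β} (hf : Synchronizing f)
    (hK : IsFactorization f K) (hu : SquareFree (K.map Prod.fst)) (hlen : 4 ≤ K.length) :
    ¬ IsTightSquare K P x S := by
  intro hsq
  obtain ⟨LA, t, T₁, T₂, LB, hsplit, -, h₁, h₂⟩ := exists_split_of_joinBlocks_eq
    (Y := P ++ x) (Z := x ++ S) (by rw [hsq.eq]; simp) (by simp [hsq.ne_nil])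
  have hK_len : K.length = LA.length + LB.length + 1 := by simp [hsplit]; omega
  rcases le_or_gt 2 LB.length with hLB | hLB
  · exact hf.not_isTightSquare_of_split hK hu hsplit hLB h₁ h₂ hsq
  -- otherwise the mirror image has at least two blocks after its midpoint
  refine hf.reverse.not_isTightSquare_of_split hK.reverse
    (by rw [map_fst_reverseBlocks]; exact hu.reverse)
    (LA := reverseBlocks LB) (LB := reverseBlocks LA) (t := t) (T₁ := T₂.reverse)
    (T₂ := T₁.reverse) (by simp [hsplit, reverseBlocks]) (by simp [reverseBlocks]; omega) ?_ ?_
    hsq.reverse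
  · rw [joinBlocks_reverseBlocks, ← List.reverse_append, ← List.reverse_append, h₂]
  · rw [joinBlocks_reverseBlocks, ← List.reverse_append, ← List.reverse_append, h₁]

theorem squareFree_joinBlocks {K : List (α × List β)} (hf : Synchronizing f)
    (hK : IsFactorization f K) (hu : SquareFree (K.map Prod.fst))
    (h₃ : ∀ K', K' <:+: K → K'.length ≤ 3 → SquareFree (joinBlocks K')) :
    SquareFree (joinBlocks K) := by
  induction hn : K.length using Nat.strong_induction_on generalizing K with
  | _ n ih =>
  subst hn
  rintro x hx ⟨P, S, h⟩
  rcases le_or_gt K.length 3 with h3 | h4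
  · exact h₃ K List.infix_rfl h3 x hx ⟨P, S, h⟩
  have shorter : ∀ K', K' <:+: K → K'.length < K.length → ¬ x ++ x <:+: joinBlocks K' :=
    fun K' hK' hlt => ih _ hlt (hK.subset hK'.subset) (hu.of_infix (hK'.map _))
      (fun K'' h'' => h₃ K'' (h''.trans hK')) rfl x hx
  have hK₀ : K ≠ [] := List.ne_nil_of_length_pos (by omega)
  obtain ⟨⟨a, A⟩, K₁, hK₁⟩ := List.exists_cons_of_ne_nil hK₀
  obtain ⟨K₂, ⟨c, C⟩, hK₂⟩ := (List.eq_nil_or_concat' K).resolve_left hK₀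
  have hP : P.length < A.length := by
    by_contra! hle
    refine shorter K₁ (hK₁ ▸ (List.suffix_cons _ _).isInfix) (by simp [hK₁])
      (List.infix_of_append_eq_append_left (by simpa [hK₁] using h.symm) hle)
  have hS : S.length < C.length := by
    by_contra! hle
    refine shorter K₂ (hK₂ ▸ (List.prefix_append _ _).isInfix) (by simp [hK₂])
      (List.infix_of_append_eq_append_right (by simpa [hK₂] using h.symm) hle)
  exact hf.not_isTightSquare (P := P) (S := S) hK hu h4
    ⟨hx, by simp [← h], by simp [hK₁, hP], by simp [hK₂, hS]⟩

end Synchronizing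

/-- Theorem 6: sufficient conditions for a set-valued substitution `f` to map a
square-free word `u` to a set of square-free words. -/
theorem squarefree_substitution {α β : Type*} (f : α → Set (List β)) (u : List α)
    (hu : SquareFree u)
    (hI : ∀ v : List α, v <:+: u → v.length ≤ 3 → ∀ W ∈ SubstSet f v, SquareFree W)
    (hII_i : ∀ (a b : α) (A B : List β), A ∈ f a → B ∈ f b →
      A <:+: B → a = b ∧ A = B)
    (hII_ii : ∀ (a b c : α) (A B C : List β), A ∈ f a → B ∈ f b → C ∈ f c →
      ∀ p s : List β, A ++ B = p ++ C ++ s → p = [] ∨ s = [])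
    (hII_iii : ∀ (a b c : α) (A B C : List β), A ∈ f a → B ∈ f b → C ∈ f c →
      ∀ A' A'' B' B'' : List β, A = A' ++ A'' → B = B' ++ B'' → C = A' ++ B'' →
        c = a ∨ c = b) :
    ∀ W ∈ SubstSet f u, SquareFree W := by
  have hf : Synchronizing f := ⟨hII_i _ _ _ _, fun hA hB hC => hII_ii _ _ _ _ _ _ hA hB hC _ _,
    fun hA hB hC => hII_iii _ _ _ _ _ _ hA hB hC _ _ _ _⟩
  intro W hW
  obtain ⟨L, rfl, hL, rfl⟩ := exists_of_mem_substSet hW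
  by_cases hnil : ∃ p ∈ L, p.2 = []
  · -- the empty block is a factor of every block, so all blocks are empty
    obtain ⟨⟨a, _⟩, hp, rfl⟩ := hnil
    have : joinBlocks L = [] := List.flatten_eq_nil_iff.2 fun B hB => by
      obtain ⟨⟨b, B⟩, hq, rfl⟩ := List.mem_map.1 hB
      exact (hf.eq_of_infix (hL _ hp) (hL _ hq) List.nil_infix).2.symm
    rw [this]
    exact SquareFree.nil
  refine hf.squareFree_joinBlocks (fun p hp => ⟨hL p hp, fun h => hnil ⟨p, hp, h⟩⟩) hu
    fun K hK hK₃ => hI _ (hK.map _) (by simpa using hK₃) _ ?_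
  exact joinBlocks_mem_substSet fun p hp => hL p (hK.subset hp)
end

section
/- Let w be a word over an alphabet Σ with |w| ≥ 2. If the circular word ⟨w⟩ is square-free, then every circumnavigation of ⟨w⟩ is square-free. -/
/-- The circular word `⟨w⟩` is square-free: every conjugate (rotation) of `w` is square-free. -/
def CircSquareFree {α : Type*} (w : List α) : Prop :=
  ∀ u : List α, u ~r w → SquareFree u

/-- The circular word `⟨w⟩` is extremal square-free. -/
def ExtremalCircSquareFree {α : Type*} (w : List α) : Prop :=
  CircSquareFree w ∧
    ∀ (w' w'' : List α) (a : α), w = w' ++ w'' → ¬ CircSquareFree (w' ++ [a] ++ w'')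

/-!
A square in `a v a` that misses the last letter lies in the conjugate `a v`, one that misses the
first letter lies in the conjugate `v a`. The remaining case `a v a = x x` is impossible: writing
`x = a y` gives `v a = y a y`, so `a y y` is a conjugate of `⟨w⟩`, and `y` is nonempty because
`|w| ≥ 2`.
-/

theorem List.IsInfix.eq_or_infix_dropLast_or_infix_tail {α : Type*} {u l : List α}
    (h : u <:+: l) : u = l ∨ u <:+: l.dropLast ∨ u <:+: l.tail := by
  obtain ⟨s, t, rfl⟩ := h
  rcases s with _ | ⟨b, s⟩
  · rcases t.eq_nil_or_concat with rfl | ⟨t, c, rfl⟩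
    · simp
    · exact .inr <| .inl ⟨[], t, by simp [← List.append_assoc]⟩
  · exact .inr <| .inr ⟨s, t, rfl⟩

theorem CircSquareFree.cons_append_singleton_ne_square {α : Type*} {w v : List α} {a : α}
    (hsf : CircSquareFree w) (hw : 2 ≤ w.length) (hrot : (a :: v) ~r w) (x : List α) : x ++ x ≠ a :: v ++ [a] := by
  intro hxx
  obtain ⟨y, rfl⟩ : ∃ y, x = a :: y := by
    rcases x with _ | ⟨b, y⟩
    · simp at hxx
    · exact ⟨y, by simp_all⟩
  have hv : v ++ [a] = y ++ a :: y := by simpa using hxx.symm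
  have hy : y ≠ [] := by
    rintro rfl
    obtain rfl : v = [] := by simpa using hv
    have hlen : 1 = w.length := hrot.perm.length_eq
    omega
  have hconj : (a :: (y ++ y)) ~r w := by
    have : (a :: y ++ y) ~r (y ++ a :: y) := List.isRotated_append
    rw [← hv] at this
    simpa using this.trans ((List.isRotated_concat a v).trans hrot)
  exact hsf _ hconj y hy ⟨[a], [], by simp⟩

/-- Lemma 9: if `|w| ≥ 2` and the circular word `⟨w⟩` is square-free, then every
circumnavigation `a v a` of `⟨w⟩` (where `a :: v` is a conjugate of `w`) is square-free. -/
theorem circumnavigations_squarefree {α : Type*} (w : List α) (hw : 2 ≤ w.length)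
    (hsf : CircSquareFree w) :
    ∀ (a : α) (v : List α), (a :: v) ~r w → SquareFree (a :: v ++ [a]) := by
  intro a v hrot x hx hxx
  rcases hxx.eq_or_infix_dropLast_or_infix_tail with hsq | hpre | hsuf
  · exact hsf.cons_append_singleton_ne_square hw hrot x hsq
  · exact hsf _ hrot x hx (by rwa [List.dropLast_concat] at hpre)
  · exact hsf _ (List.isRotated_concat a v |>.trans hrot) x hx (by simpa using hsuf)
end

section
/- Let ⟨w⟩ be a square-free circular word of length at least 2 over the alphabet {0, 1, 2}, and let W be any word in the set h(w). Then the circular word ⟨W⟩ is square-free and walkable in the digraph D. -/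
/-- The identity permutation `()` of `Γ = {a,b,c}` (with `a = 0`, `b = 1`, `c = 2`). -/
def pid : Equiv.Perm (Fin 3) := 1
/-- The permutation `(ab)`. -/
def pab : Equiv.Perm (Fin 3) := Equiv.swap 0 1
/-- The permutation `(ac)`. -/
def pac : Equiv.Perm (Fin 3) := Equiv.swap 0 2
/-- The permutation `(bc)`. -/
def pbc : Equiv.Perm (Fin 3) := Equiv.swap 1 2
/-- The permutation `(abc)`, i.e. `a ↦ b ↦ c ↦ a`. -/
def pabc : Equiv.Perm (Fin 3) := (Equiv.swap 0 1).trans (Equiv.swap 0 2)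
/-- The permutation `(acb)`, i.e. `a ↦ c ↦ b ↦ a`. -/
def pacb : Equiv.Perm (Fin 3) := (Equiv.swap 0 2).trans (Equiv.swap 0 1)

/-- The vertex set `V(D) = S_Γ ∪ S̃_Γ`: a permutation `π` together with a Boolean
which is `false` for the plain letter `π` and `true` for its mirror image `π̃`. -/
abbrev V : Type := Equiv.Perm (Fin 3) × Bool

/-- The 24 arcs of the digraph `D`. -/
def arcs : List (V × V) :=
  [((pid,false),(pab,true)), ((pac,true),(pid,false)), ((pab,false),(pid,true)),
   ((pacb,true),(pab,false)), ((pid,true),(pac,false)), ((pac,false),(pabc,true)),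
   ((pabc,true),(pbc,false)), ((pbc,false),(pacb,true)), ((pabc,false),(pac,true)),
   ((pbc,true),(pabc,false)), ((pab,true),(pacb,false)), ((pacb,false),(pbc,true)),
   ((pid,false),(pbc,false)), ((pbc,false),(pid,false)), ((pab,false),(pabc,false)),
   ((pabc,false),(pab,false)), ((pac,false),(pacb,false)), ((pacb,false),(pac,false)),
   ((pbc,true),(pid,true)), ((pid,true),(pbc,true)), ((pabc,true),(pab,true)),
   ((pab,true),(pabc,true)), ((pacb,true),(pac,true)), ((pac,true),(pacb,true))]

/-- The arc relation of the digraph `D`. -/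
def Arc (x y : V) : Prop := (x, y) ∈ arcs

/-- For `x = (π, false)` this is `W_π` (permute letters by `π`);
for `x = (π, true)` this is `W_π̃` (the reversal of `W_π`). -/
def applyV (x : V) (w : List (Fin 3)) : List (Fin 3) :=
  if x.2 then (w.map x.1).reverse else w.map x.1

/-- The circular word `⟨w⟩` is walkable in `D`: every conjugate of `w` is a walk in `D`. -/
def CircWalkable (w : List V) : Prop :=
  ∀ u : List V, u ~r w → List.Chain' Arc u

/-- The substitution `h` from words over `{0,1,2}` to sets of words over `V(D)`. -/
def hsub : Fin 3 → Set (List V) :=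
  ![{[(pid,false),(pab,true),(pacb,false),(pac,false),(pabc,true),(pbc,false)]},
    {[(pid,false),(pab,true),(pabc,true),(pbc,false),(pacb,true),(pac,true)]},
    {[(pid,false),(pab,true),(pacb,false),(pbc,true),(pabc,false),(pac,true)],
     [(pid,false),(pab,true),(pacb,false),(pbc,true),(pabc,false),(pab,false),
      (pabc,false),(pac,true)]}]

/-!
Every block of `h` starts with `()` and contains no other `()`, so in the circular word `⟨W⟩` the
letters `()` mark exactly the block boundaries. Blocks are square-free, so the first half `x` of a
square `x x` in `⟨W⟩` contains a boundary, and the boundaries in the second half are those of the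
first shifted by `|x|`. Hence the blocks lying inside `x` repeat. If at least four letters of the
last block meeting `x` lie in `x`, they identify that block; otherwise, blocks having at least six
letters, the last three letters of the block ending at the first boundary of `x` identify it.
Either way the letters of `w` under `x x` contain a square of length at most `|w|` in `⟨w⟩`, as all
blocks have between six and eight letters. Walkability is checked on the blocks: each block
followed by `()` is a walk in `D`.
-/

section Lists

variable {α β : Type*}

lemma List.IsPrefix.take_eq {u A : List β} (hu : u <+: A) {n : ℕ} (hn : n ≤ u.length) :
    A.take n = u.take n := by
  rw [List.prefix_iff_eq_take.1 hu, List.take_take, Nat.min_eq_left hn]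

lemma List.IsSuffix.take_reverse_eq {u A : List β} (hu : u <:+ A) {n : ℕ} (hn : n ≤ u.length) :
    A.reverse.take n = u.reverse.take n :=
  (List.reverse_prefix.2 hu).take_eq (by simpa using hn)

lemma squareFree_of_forall_take_drop_ne {A : List β}
    (hA : ∀ i n, 0 < n → i + 2 * n ≤ A.length → (A.drop i).take n ≠ (A.drop (i + n)).take n) :
    SquareFree A := by
  rintro x hx ⟨a, b, rfl⟩
  refine hA a.length x.length (List.length_pos_iff.2 hx) (by simp; omega) ?_
  simp [List.drop_append, List.append_assoc,
    List.drop_eq_nil_of_le (show a.length ≤ a.length + x.length by omega)]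

lemma List.Forall₂.exists_of_mem_right {R : α → β → Prop} {l₁ : List α} {l₂ : List β}
    (h : List.Forall₂ R l₁ l₂) {b : β} (hb : b ∈ l₂) : ∃ a ∈ l₁, R a b := by
  induction h with
  | nil => simp at hb
  | cons hab _ ih =>
    rcases List.mem_cons.1 hb with rfl | hb
    · exact ⟨_, List.mem_cons_self, hab⟩
    · obtain ⟨a, ha, hR⟩ := ih hb
      exact ⟨a, List.mem_cons_of_mem _ ha, hR⟩

end Lists

section Factor

variable {α : Type*}

def factorAt (f : ℕ → α) (i n : ℕ) : List α := (List.range n).map fun t => f (i + t)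

@[simp] lemma length_factorAt (f : ℕ → α) (i n : ℕ) : (factorAt f i n).length = n := by
  simp [factorAt]

@[simp] lemma getElem_factorAt (f : ℕ → α) (i n t : ℕ) (ht : t < (factorAt f i n).length) :
    (factorAt f i n)[t] = f (i + t) := by
  simp [factorAt]

lemma factorAt_add (f : ℕ → α) (i n n' : ℕ) :
    factorAt f i (n + n') = factorAt f i n ++ factorAt f (i + n) n' := by
  simp [factorAt, List.range_add, Nat.add_assoc]

lemma factorAt_eq_factorAt_iff {f : ℕ → α} {i j n : ℕ} :
    factorAt f i n = factorAt f j n ↔ ∀ t < n, f (i + t) = f (j + t) := by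
  simp [factorAt, List.map_inj_left]

lemma factorAt_infix_factorAt (f : ℕ → α) {i i' n n' : ℕ} (hi : i ≤ i') (hn : i' + n' ≤ i + n) :
    factorAt f i' n' <:+: factorAt f i n := by
  obtain ⟨a, rfl⟩ := Nat.exists_eq_add_of_le hi
  obtain ⟨b, hb⟩ := Nat.exists_eq_add_of_le (show a + n' ≤ n by omega)
  refine ⟨factorAt f i a, factorAt f (i + a + n') b, ?_⟩
  rw [hb, factorAt_add, factorAt_add, Nat.add_assoc]

lemma factorAt_prefix_factorAt (f : ℕ → α) (i : ℕ) {n n' : ℕ} (hn : n' ≤ n) :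
    factorAt f i n' <+: factorAt f i n := by
  obtain ⟨a, rfl⟩ := Nat.exists_eq_add_of_le hn
  exact ⟨_, (factorAt_add f i n' a).symm⟩

lemma factorAt_suffix_factorAt (f : ℕ → α) (i : ℕ) {n n' : ℕ} (hn : n' ≤ n) :
    factorAt f (i + n - n') n' <:+ factorAt f i n := by
  obtain ⟨a, rfl⟩ := Nat.exists_eq_add_of_le' hn
  refine ⟨factorAt f i a, ?_⟩
  rw [factorAt_add]
  congr 2
  omega

def cyc [Inhabited α] (w : List α) (q : ℕ) : α := w.getI (q % w.length)

variable [Inhabited α]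

lemma cyc_length_mul_add (w : List α) (q i : ℕ) : cyc w (w.length * q + i) = cyc w i := by
  simp [cyc]

lemma take_rotate_eq_factorAt {w : List α} {n : ℕ} (r : ℕ) (hn : n ≤ w.length) :
    (w.rotate r).take n = factorAt (cyc w) r n := by
  apply List.ext_getElem (by simpa using hn)
  intro t h _
  have ht : t < (w.rotate r).length := by simp at h; simp; omega
  rw [List.getElem_take, List.getElem_rotate, getElem_factorAt, cyc,
    List.getI_eq_getElem _ (Nat.mod_lt _ (by simp at ht; omega)), Nat.add_comm]

theorem circSquareFree_iff {w : List α} :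
    CircSquareFree w ↔ ∀ r l, 0 < l → 2 * l ≤ w.length →
      factorAt (cyc w) r l ≠ factorAt (cyc w) (r + l) l := by
  constructor
  · intro hsf r l hl h2l heq
    refine hsf (w.rotate r) (List.IsRotated.forall w r) (factorAt (cyc w) r l)
      (by simpa [← List.length_pos_iff] using hl) ?_
    nth_rewrite 2 [heq]
    rw [← factorAt_add, ← two_mul, ← take_rotate_eq_factorAt r h2l]
    exact (List.take_prefix _ _).isInfix
  · rintro hsq u hu x hx ⟨a, b, hab⟩
    obtain ⟨r, rfl⟩ := hu.symm
    have hlen : 2 * x.length ≤ w.length := by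
      have := congrArg List.length hab
      simp at this; omega
    have hpre : x ++ x <+: w.rotate (r + a.length) := by
      rw [← List.rotate_rotate, ← hab, List.append_assoc, List.rotate_append_length_eq]
      exact ⟨b ++ a, by simp⟩
    rw [List.prefix_iff_eq_take, List.length_append, ← two_mul,
      take_rotate_eq_factorAt _ hlen, two_mul, factorAt_add] at hpre
    obtain ⟨h1, h2⟩ := List.append_inj hpre.symm (by simp)
    exact hsq _ x.length (List.length_pos_iff.2 hx) hlen (h1.trans h2.symm)

end Factor

section Synchronization

variable {s : ℕ → ℕ} {P l : ℕ}

theorem StrictMono.apply_add_eq_of_shift (hs : StrictMono s)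
    (hshift : ∀ x, P ≤ x → x < P + l → (x ∈ Set.range s ↔ x + l ∈ Set.range s))
    {j₀ i₁ : ℕ} (hj₀ : P ≤ s j₀) (hj₀' : ∀ j < j₀, s j < P)
    (hi₁ : P + l ≤ s i₁) (hi₁' : ∀ j < i₁, s j < P + l) :
    ∀ t, s (j₀ + t) < P + l → s (i₁ + t) = s (j₀ + t) + l := by
  -- A start strictly before the expected one would shift back by `l` to a start below `s j₀`, or
  -- strictly between two consecutive starts.
  intro t
  induction t with
  | zero =>
    simp only [Nat.add_zero]
    intro ht
    obtain ⟨J, hJ⟩ := (hshift _ hj₀ ht).1 ⟨j₀, rfl⟩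
    have hJi : i₁ ≤ J := by
      by_contra! h
      have := hi₁' J h
      omega
    rcases hJi.eq_or_lt with rfl | hlt
    · exact hJ
    · obtain ⟨J', hJ'⟩ := (hshift (s i₁ - l) (by omega) (by have := hs hlt; omega)).2
        ⟨i₁, by omega⟩
      have : J' < j₀ := hs.lt_iff_lt.1 (by have := hs hlt; omega)
      have := hj₀' J' this
      omega
  | succ t ih =>
    intro ht
    have hstep := hs (show j₀ + t < j₀ + (t + 1) by omega)
    have ih := ih (by omega)
    have hPt : P ≤ s (j₀ + (t + 1)) := le_trans hj₀ (hs.monotone (by omega))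
    obtain ⟨J, hJ⟩ := (hshift _ hPt ht).1 ⟨_, rfl⟩
    have hJi : i₁ + t < J := hs.lt_iff_lt.1 (by rw [ih, hJ]; omega)
    rcases (Nat.succ_le_of_lt hJi).eq_or_lt with h | hlt
    · rw [← hJ, ← h]; rfl
    · have hlt' : s (i₁ + (t + 1)) < s J := hs (by omega)
      have hi : P + l ≤ s (i₁ + (t + 1)) := le_trans hi₁ (hs.monotone (by omega))
      obtain ⟨J', hJ'⟩ := (hshift (s (i₁ + (t + 1)) - l) (by omega) (by omega)).2
        ⟨i₁ + (t + 1), by omega⟩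
      have h1 : j₀ + t < J' := hs.lt_iff_lt.1 (by
        have := hs (show i₁ + t < i₁ + (t + 1) by omega); omega)
      have h2 : J' < j₀ + (t + 1) := hs.lt_iff_lt.1 (by omega)
      omega

theorem StrictMono.add_le_apply_succ_of_shift (hs : StrictMono s)
    (hshift : ∀ x, P ≤ x → x < P + l → (x ∈ Set.range s ↔ x + l ∈ Set.range s))
    {j i : ℕ} (hPj : P ≤ s j) (hj : P + l ≤ s (j + 1))
    (hi : s i = s j + l) : P + 2 * l ≤ s (i + 1) := by
  by_contra! hlt
  have hi' : s i < s (i + 1) := hs (by omega)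
  obtain ⟨J, hJ⟩ := (hshift (s (i + 1) - l) (by omega) (by omega)).2 ⟨i + 1, by omega⟩
  have h1 : j < J := hs.lt_iff_lt.1 (by omega)
  have h2 : J < j + 1 := hs.lt_iff_lt.1 (by omega)
  omega

end Synchronization

section MarkedCode

variable {α β : Type*}

structure IsMarkedCode (h : α → Set (List β)) (m : β) (pre suf : ℕ) : Prop where
  head?_eq : ∀ a, ∀ A ∈ h a, A.head? = some m
  not_mem_tail : ∀ a, ∀ A ∈ h a, m ∉ A.tail
  squareFree : ∀ a, ∀ A ∈ h a, SquareFree A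
  injective : ∀ a b, ∀ A ∈ h a, A ∈ h b → a = b
  eq_of_prefix : ∀ a b, ∀ A ∈ h a, ∀ B ∈ h b, ∀ u : List β,
    pre ≤ u.length → u <+: A → u <+: B → a = b
  eq_of_suffix : ∀ a b, ∀ A ∈ h a, ∀ B ∈ h b, ∀ u : List β,
    suf ≤ u.length → u <:+ A → u <:+ B → a = b
  -- The length conditions make the partial block at one end of a square long enough for
  -- `eq_of_prefix` or `eq_of_suffix`, and keep the induced square of letters within one period.
  add_le_length : ∀ a, ∀ A ∈ h a, pre + suf ≤ A.length + 1
  length_lt_add : ∀ a b c, ∀ A ∈ h a, ∀ B ∈ h b, ∀ C ∈ h c, A.length < B.length + C.length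

structure IsParse (h : α → Set (List β)) (f : ℕ → β) (c : ℕ → α) (b : ℕ → List β) (s : ℕ → ℕ) :
    Prop where
  mem : ∀ j, b j ∈ h (c j)
  start_zero : s 0 = 0
  start_succ : ∀ j, s (j + 1) = s j + (b j).length
  eq_factorAt : ∀ j, b j = factorAt f (s j) (b j).length

variable {h : α → Set (List β)} {m : β} {pre suf : ℕ}
  {f : ℕ → β} {c : ℕ → α} {b : ℕ → List β} {s : ℕ → ℕ}

lemma IsMarkedCode.length_pos (hh : IsMarkedCode h m pre suf) {a : α} {A : List β}
    (hA : A ∈ h a) : 0 < A.length := by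
  have := hh.head?_eq a A hA
  cases A <;> simp_all

namespace IsParse

lemma strictMono (hh : IsMarkedCode h m pre suf) (hf : IsParse h f c b s) : StrictMono s :=
  strictMono_nat_of_lt_succ fun j => by
    have := hh.length_pos (hf.mem j)
    rw [hf.start_succ]
    omega

lemma apply_add (hf : IsParse h f c b s) {j t : ℕ} (ht : t < (b j).length) :
    f (s j + t) = (b j)[t] := by
  have key := congrArg (·[t]?) (hf.eq_factorAt j)
  simp only [List.getElem?_eq_getElem ht, factorAt, List.getElem?_map, List.getElem?_range ht,
    Option.map_some, Option.some_inj] at key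
  exact key.symm

variable (hh : IsMarkedCode h m pre suf) (hf : IsParse h f c b s)
include hh hf

lemma exists_start_le_lt (q : ℕ) : ∃ j, s j ≤ q ∧ q < s (j + 1) := by
  have hex : ∃ j, q < s j := ⟨q + 1, Nat.lt_of_lt_of_le (Nat.lt_succ_self q)
    ((hf.strictMono hh).id_le _)⟩
  obtain ⟨j, hj⟩ : ∃ j, Nat.find hex = j + 1 :=
    Nat.exists_eq_add_one.2 (Nat.pos_of_ne_zero fun h0 => by
      have := Nat.find_spec hex
      rw [h0, hf.start_zero] at this
      omega)
  refine ⟨j, not_lt.1 (Nat.find_min hex (by omega)), ?_⟩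
  rw [← hj]
  exact Nat.find_spec hex

lemma apply_eq_iff_mem_range (q : ℕ) : f q = m ↔ q ∈ Set.range s := by
  obtain ⟨j, hj, hj'⟩ := hf.exists_start_le_lt hh q
  rw [hf.start_succ] at hj'
  have ht : q - s j < (b j).length := by omega
  have hfq : f q = (b j)[q - s j] := by
    rw [← hf.apply_add ht, Nat.add_sub_cancel' hj]
  have hrange : q ∈ Set.range s ↔ q = s j := by
    refine ⟨fun ⟨J, hJ⟩ => ?_, fun hq => ⟨j, hq.symm⟩⟩
    have h1 : j ≤ J := (hf.strictMono hh).le_iff_le.1 (hJ ▸ hj)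
    have h2 : J < j + 1 := (hf.strictMono hh).lt_iff_lt.1 (by rw [hf.start_succ]; omega)
    rw [← hJ, show J = j by omega]
  rw [hfq, hrange]
  constructor
  · intro hm
    by_contra hne
    apply hh.not_mem_tail _ _ (hf.mem j)
    obtain ⟨t, ht'⟩ : ∃ t, q - s j = t + 1 := Nat.exists_eq_add_one.2 (by omega)
    have : (b j)[q - s j] = (b j).tail[t]'(by simp; omega) := by simp [ht']
    rw [← hm, this]
    exact List.getElem_mem _
  · intro hq
    have := hh.head?_eq _ _ (hf.mem j)
    simp only [hq, Nat.sub_self]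
    rw [List.head?_eq_getElem?, List.getElem?_eq_getElem (by omega)] at this
    exact Option.some_inj.1 this

lemma letter_eq_of_prefix {i i' e : ℕ} (he : pre ≤ e) (hi : e ≤ (b i).length)
    (hi' : e ≤ (b i').length) (heq : factorAt f (s i) e = factorAt f (s i') e) : c i = c i' := by
  refine hh.eq_of_prefix _ _ _ (hf.mem i) _ (hf.mem i') (factorAt f (s i) e) (by simpa) ?_ ?_
  · rw [hf.eq_factorAt i]
    exact factorAt_prefix_factorAt f _ hi
  · rw [hf.eq_factorAt i', heq]
    exact factorAt_prefix_factorAt f _ hi'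

lemma letter_eq_of_suffix {i i' d : ℕ} (hd : suf ≤ d) (hi : d ≤ (b i).length)
    (hi' : d ≤ (b i').length)
    (heq : factorAt f (s (i + 1) - d) d = factorAt f (s (i' + 1) - d) d) : c i = c i' := by
  refine hh.eq_of_suffix _ _ _ (hf.mem i) _ (hf.mem i') (factorAt f (s (i + 1) - d) d)
    (by simpa) ?_ ?_
  · rw [hf.eq_factorAt i, hf.start_succ]
    exact factorAt_suffix_factorAt f _ hi
  · rw [hf.eq_factorAt i', heq, hf.start_succ]
    exact factorAt_suffix_factorAt f _ hi'

variable {P l : ℕ} (hsq : ∀ t < l, f (P + t) = f (P + l + t))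
include hsq

lemma exists_marker_of_square (hl : 0 < l) : ∃ d < l, f (P + d) = m := by
  by_contra! hno
  obtain ⟨j, hj, hj'⟩ := hf.exists_start_le_lt hh P
  have hend : P + 2 * l ≤ s (j + 1) := by
    by_contra! hlt
    have hm := (hf.apply_eq_iff_mem_range hh (s (j + 1))).2 ⟨_, rfl⟩
    rcases Nat.lt_or_ge (s (j + 1)) (P + l) with h1 | h1
    · exact hno (s (j + 1) - P) (by omega) (by rwa [Nat.add_sub_cancel' (by omega)])
    · refine hno (s (j + 1) - P - l) (by omega) ?_
      rw [hsq _ (by omega), show P + l + (s (j + 1) - P - l) = s (j + 1) by omega, hm]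
  have hsquare : factorAt f P (l + l) = factorAt f P l ++ factorAt f P l := by
    rw [factorAt_add, factorAt_eq_factorAt_iff.2 fun t ht => (hsq t ht).symm]
  refine hh.squareFree _ _ (hf.mem j) (factorAt f P l) (by simpa [← List.length_pos_iff]) ?_
  rw [← hsquare, hf.eq_factorAt j]
  exact factorAt_infix_factorAt f hj (by rw [hf.start_succ] at hend; omega)

lemma mem_range_iff_add_mem_range {x : ℕ} (hx : P ≤ x) (hx' : x < P + l) :
    x ∈ Set.range s ↔ x + l ∈ Set.range s := by
  rw [← hf.apply_eq_iff_mem_range hh, ← hf.apply_eq_iff_mem_range hh]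
  have := hsq (x - P) (by omega)
  rw [Nat.add_sub_cancel' hx, show P + l + (x - P) = x + l by omega] at this
  rw [this]

lemma letter_eq_of_shift {i i' : ℕ} (hP : P ≤ s i) (hP' : s (i + 1) ≤ P + l)
    (hi : s i' = s i + l) (hi' : s (i' + 1) = s (i + 1) + l) : c i' = c i := by
  rw [hf.start_succ, hf.start_succ] at *
  have hlen : (b i').length = (b i).length := by omega
  have hb : b i' = b i := by
    rw [hf.eq_factorAt i', hf.eq_factorAt i, hlen, hi, factorAt_eq_factorAt_iff]
    intro t ht
    have := hsq (s i - P + t) (by omega)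
    rw [show P + (s i - P + t) = s i + t by omega,
      show P + l + (s i - P + t) = s i + l + t by omega] at this
    exact this.symm
  exact hh.injective _ _ _ (hf.mem i') (hb ▸ hf.mem i)

lemma exists_window (hl : 0 < l) :
    ∃ j₀ k, P ≤ s j₀ ∧ (∀ j < j₀, s j < P) ∧ s (j₀ + k) < P + l ∧ P + l ≤ s (j₀ + k + 1) := by
  classical
  have hs := hf.strictMono hh
  obtain ⟨d, hd, hm⟩ := hf.exists_marker_of_square hh hsq hl
  obtain ⟨J, hJ⟩ := (hf.apply_eq_iff_mem_range hh _).1 hm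
  have hex₀ : ∃ j, P ≤ s j := ⟨J, by omega⟩
  have hex₁ : ∃ j, P + l ≤ s j := ⟨P + l, hs.id_le _⟩
  have hJ₀ : Nat.find hex₀ ≤ J := Nat.find_min' hex₀ (by omega)
  have hJ₁ : J < Nat.find hex₁ := hs.lt_iff_lt.1 (by have := Nat.find_spec hex₁; omega)
  have hlast : s (Nat.find hex₁ - 1) < P + l := not_le.1 (Nat.find_min hex₁ (by omega))
  refine ⟨Nat.find hex₀, Nat.find hex₁ - 1 - Nat.find hex₀, Nat.find_spec hex₀,
    fun j hj => not_le.1 (Nat.find_min hex₀ hj), ?_, ?_⟩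
  · rwa [Nat.add_sub_cancel' (by omega)]
  · rw [Nat.add_sub_cancel' (by omega), Nat.sub_add_cancel (by omega)]
    exact Nat.find_spec hex₁

section Window

variable {j₀ k : ℕ} (hP : P ≤ s j₀) (hlast : s (j₀ + k) < P + l)
include hP hlast

lemma start_add_eq_of_window (hlt : ∀ j < j₀, s j < P) (hnext : P + l ≤ s (j₀ + k + 1)) :
    ∀ t, s (j₀ + t) < P + l → s (j₀ + k + 1 + t) = s (j₀ + t) + l :=
  (hf.strictMono hh).apply_add_eq_of_shift (fun _ => hf.mem_range_iff_add_mem_range hh hsq) hP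
    hlt hnext fun j hj => lt_of_le_of_lt ((hf.strictMono hh).monotone (by omega)) hlast

variable (hsync : ∀ t, s (j₀ + t) < P + l → s (j₀ + k + 1 + t) = s (j₀ + t) + l)
include hsync

lemma letter_eq_of_window {t : ℕ} (ht : t < k) : c (j₀ + t) = c (j₀ + k + 1 + t) := by
  have hs := hf.strictMono hh
  have h1 : s (j₀ + (t + 1)) ≤ s (j₀ + k) := hs.monotone (by omega)
  have h2 : s (j₀ + t) < s (j₀ + (t + 1)) := hs (by omega)
  exact (hf.letter_eq_of_shift hh hsq (le_trans hP (hs.monotone (Nat.le_add_right j₀ t)))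
    (h1.trans hlast.le) (hsync t (by omega)) (hsync (t + 1) (by omega))).symm

lemma exists_letter_square_of_prefix (hnext : P + l ≤ s (j₀ + k + 1))
    (he : pre ≤ P + l - s (j₀ + k)) :
    ∃ i n, s (i + 2 * n + 1) < s i + 2 * l ∧ ∀ t ≤ n, c (i + t) = c (i + (n + 1) + t) := by
  have hs := hf.strictMono hh
  have hPk : P ≤ s (j₀ + k) := le_trans hP (hs.monotone (Nat.le_add_right j₀ k))
  have hshift : s (j₀ + k + 1 + k) = s (j₀ + k) + l := hsync k hlast
  have hnext' : P + 2 * l ≤ s (j₀ + k + 1 + k + 1) := hs.add_le_apply_succ_of_shift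
    (fun _ => hf.mem_range_iff_add_mem_range hh hsq) hPk hnext hshift
  have hb := hf.start_succ (j₀ + k)
  have hb' := hf.start_succ (j₀ + k + 1 + k)
  have hlast_eq : c (j₀ + k) = c (j₀ + k + 1 + k) := by
    refine hf.letter_eq_of_prefix hh he (by omega) (by omega) ?_
    rw [hshift, factorAt_eq_factorAt_iff]
    intro t ht
    have := hsq (s (j₀ + k) - P + t) (by omega)
    rwa [show P + (s (j₀ + k) - P + t) = s (j₀ + k) + t by omega,
      show P + l + (s (j₀ + k) - P + t) = s (j₀ + k) + l + t by omega] at this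
  refine ⟨j₀, k, ?_, fun t ht => ?_⟩
  · rw [show j₀ + 2 * k + 1 = j₀ + k + 1 + k by omega, hshift]
    omega
  rcases ht.lt_or_eq with ht | rfl
  · rw [show j₀ + (k + 1) + t = j₀ + k + 1 + t by omega]
    exact hf.letter_eq_of_window hh hsq hP hlast hsync ht
  · rwa [show j₀ + (t + 1) + t = j₀ + t + 1 + t by omega]

lemma exists_letter_square_of_suffix (hsuf : 0 < suf) (hlt : ∀ j < j₀, s j < P)
    (he : P + l - s (j₀ + k) < pre) :
    ∃ i n, s (i + 2 * n + 1) < s i + 2 * l ∧ ∀ t ≤ n, c (i + t) = c (i + (n + 1) + t) := by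
  have hs := hf.strictMono hh
  have hshift : s (j₀ + k + 1 + k) = s (j₀ + k) + l := hsync k hlast
  have hend : s (j₀ + k + 1) = s j₀ + l := hsync 0 (lt_of_le_of_lt (hs.monotone (by omega)) hlast)
  have hlen := hh.add_le_length _ _ (hf.mem (j₀ + k))
  have hb := hf.start_succ (j₀ + k)
  obtain ⟨j, rfl⟩ : ∃ j, j₀ = j + 1 :=
    Nat.exists_eq_add_one.2 (hs.lt_iff_lt.1 (by rw [hf.start_zero]; omega))
  have hbj := hf.start_succ j
  have hb' := hf.start_succ (j + 1 + k + k)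
  rw [show j + 1 + k + k + 1 = j + 1 + k + 1 + k by omega] at hb'
  have hlt' := hh.length_lt_add _ _ _ _ (hf.mem j) _ (hf.mem (j + 1 + k)) _
    (hf.mem (j + 1 + k + k))
  have hj := hlt j (by omega)
  have hjk : s (j + 1) ≤ s (j + 1 + k) := hs.monotone (by omega)
  have hfirst_eq : c j = c (j + 1 + k) := by
    refine hf.letter_eq_of_suffix hh (d := s (j + 1) - P) (by omega) (by omega) (by omega) ?_
    rw [hend, factorAt_eq_factorAt_iff]
    intro t ht
    rw [show s (j + 1) - (s (j + 1) - P) + t = P + t by omega,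
      show s (j + 1) + l - (s (j + 1) - P) + t = P + l + t by omega]
    exact hsq t (by omega)
  refine ⟨j, k, ?_, fun t ht => ?_⟩
  · rw [show j + 2 * k + 1 = j + 1 + k + k by omega]
    omega
  rcases t with _ | t
  · rwa [Nat.add_zero, Nat.add_zero, show j + (k + 1) = j + 1 + k by omega]
  · rw [show j + (t + 1) = j + 1 + t by omega,
      show j + (k + 1) + (t + 1) = j + 1 + k + 1 + t by omega]
    exact hf.letter_eq_of_window hh hsq hP hlast hsync (by omega)

end Window

theorem exists_letter_square_of_square (hsuf : 0 < suf) (hl : 0 < l) :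
    ∃ i n, s (i + 2 * n + 1) < s i + 2 * l ∧ ∀ t ≤ n, c (i + t) = c (i + (n + 1) + t) := by
  obtain ⟨j₀, k, hP, hlt, hlast, hnext⟩ := hf.exists_window hh hsq hl
  have hsync := hf.start_add_eq_of_window hh hsq hP hlast hlt hnext
  -- Either the part of the square's first half after its last block start identifies that block,
  -- or it is shorter than `pre`, and then the part before its first block start is long enough.
  by_cases he : pre ≤ P + l - s (j₀ + k)
  · exact hf.exists_letter_square_of_prefix hh hsq hP hlast hsync hnext he
  · exact hf.exists_letter_square_of_suffix hh hsq hP hlast hsync hsuf hlt (not_le.1 he)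

end IsParse

end MarkedCode

section Flatten

variable {β : Type*}

lemma factorAt_cyc_append [Inhabited β] (u v w : List β) :
    factorAt (cyc (u ++ v ++ w)) u.length v.length = v := by
  apply List.ext_getElem (by simp)
  intro t ht _
  have hlt : u.length + t < (u ++ v ++ w).length := by simp at ht ⊢; omega
  rw [getElem_factorAt, cyc, Nat.mod_eq_of_lt hlt, List.getI_eq_getElem _ hlt,
    List.getElem_append_left (by simp at ht ⊢; omega), List.getElem_append_right (by omega)]
  simp

lemma factorAt_cyc_length_mul_add [Inhabited β] (w : List β) (q i n : ℕ) :
    factorAt (cyc w) (w.length * q + i) n = factorAt (cyc w) i n := by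
  simp only [factorAt, Nat.add_assoc, cyc_length_mul_add]

def cycStart (Bs : List (List β)) (j : ℕ) : ℕ := ∑ i ∈ Finset.range j, (cyc Bs i).length

variable (Bs : List (List β))

lemma cycStart_succ (j : ℕ) : cycStart Bs (j + 1) = cycStart Bs j + (cyc Bs j).length :=
  Finset.sum_range_succ _ _

lemma cycStart_eq_length_flatten_take {j : ℕ} (hj : j ≤ Bs.length) :
    cycStart Bs j = (Bs.take j).flatten.length := by
  induction j with
  | zero => simp [cycStart]
  | succ j ih =>
    have hj' : j < Bs.length := hj
    rw [cycStart_succ, ih hj'.le, List.take_add_one, List.getElem?_eq_getElem hj', cyc,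
      Nat.mod_eq_of_lt hj', List.getI_eq_getElem _ hj', List.flatten_append,
      List.length_append]
    simp

lemma cycStart_length_mul_add (q j : ℕ) :
    cycStart Bs (Bs.length * q + j) = Bs.flatten.length * q + cycStart Bs j := by
  have hsplit : ∀ q j,
      cycStart Bs (Bs.length * q + j) = cycStart Bs (Bs.length * q) + cycStart Bs j := by
    intro q j
    simp only [cycStart, Finset.sum_range_add, cyc_length_mul_add]
  have hmul : ∀ q, cycStart Bs (Bs.length * q) = Bs.flatten.length * q := by
    intro q
    induction q with
    | zero => simp [cycStart]
    | succ q ih =>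
      rw [Nat.mul_succ, hsplit, ih, cycStart_eq_length_flatten_take Bs le_rfl, List.take_length,
        Nat.mul_succ]
  rw [hsplit, hmul]

lemma cyc_eq_factorAt_cycStart [Inhabited β] (j : ℕ) :
    cyc Bs j = factorAt (cyc Bs.flatten) (cycStart Bs j) (cyc Bs j).length := by
  rcases eq_or_ne Bs [] with rfl | hne
  · simp [cyc, factorAt]
    rfl
  have hr : j % Bs.length < Bs.length := Nat.mod_lt _ (List.length_pos_iff.2 hne)
  rw [← Nat.div_add_mod j Bs.length, cyc_length_mul_add, cycStart_length_mul_add,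
    factorAt_cyc_length_mul_add, cycStart_eq_length_flatten_take Bs hr.le, cyc,
    Nat.mod_eq_of_lt hr, List.getI_eq_getElem _ hr]
  have hsplit : Bs.flatten = (Bs.take (j % Bs.length)).flatten ++ Bs[j % Bs.length] ++
      (Bs.drop (j % Bs.length + 1)).flatten := by
    conv_lhs => rw [← List.take_append_drop (j % Bs.length) Bs, List.drop_eq_getElem_cons hr]
    rw [List.flatten_append, List.flatten_cons, List.append_assoc]
  rw [hsplit, factorAt_cyc_append]

end Flatten

section Substitution

variable {α β : Type*} {h : α → Set (List β)}

lemma exists_forall₂_of_mem_substSet {w : List α} {W : List β} (hW : W ∈ SubstSet h w) :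
    ∃ Bs : List (List β), List.Forall₂ (fun a A => A ∈ h a) w Bs ∧ W = Bs.flatten := by
  induction w generalizing W with
  | nil => exact ⟨[], .nil, by simpa [SubstSet] using hW⟩
  | cons a w ih =>
    obtain ⟨A, hA, B, hB, rfl⟩ := hW
    obtain ⟨Bs, hBs, rfl⟩ := ih hB
    exact ⟨A :: Bs, .cons hA hBs, rfl⟩

theorem isParse_flatten [Inhabited α] [Inhabited β] {w : List α} {Bs : List (List β)}
    (hBs : List.Forall₂ (fun a A => A ∈ h a) w Bs) (hw : w ≠ []) :
    IsParse h (cyc Bs.flatten) (cyc w) (cyc Bs) (cycStart Bs) where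
  mem j := by
    have hr : j % w.length < w.length := Nat.mod_lt _ (List.length_pos_iff.2 hw)
    have hr' : j % w.length < Bs.length := hBs.length_eq ▸ hr
    rw [cyc, cyc, ← hBs.length_eq, List.getI_eq_getElem _ hr, List.getI_eq_getElem _ hr']
    simpa using hBs.get hr hr'
  start_zero := rfl
  start_succ := cycStart_succ Bs
  eq_factorAt := cyc_eq_factorAt_cycStart Bs

end Substitution

section Walk

variable {β : Type*} {R : β → β → Prop}

lemma head?_flatten_append {m : β} {Bs : List (List β)} (hBs : ∀ A ∈ Bs, A.head? = some m) :
    (Bs.flatten ++ [m]).head? = some m := by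
  cases Bs with
  | nil => rfl
  | cons A Bs => simp [List.head?_append, hBs A List.mem_cons_self]

lemma isChain_flatten_append {m : β} {Bs : List (List β)}
    (hBs : ∀ A ∈ Bs, A.head? = some m ∧ List.IsChain R (A ++ [m])) :
    List.IsChain R (Bs.flatten ++ [m]) := by
  induction Bs with
  | nil => exact List.isChain_singleton m
  | cons A Bs ih =>
    have hBs' : ∀ B ∈ Bs, B.head? = some m ∧ List.IsChain R (B ++ [m]) :=
      fun B hB => hBs B (List.mem_cons_of_mem _ hB)
    obtain ⟨hA, -, hlast⟩ := List.isChain_append.1 (hBs A List.mem_cons_self).2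
    rw [List.flatten_cons, List.append_assoc]
    refine hA.append (ih hBs') ?_
    rw [head?_flatten_append fun B hB => (hBs' B hB).1]
    simpa using hlast

theorem isChain_of_isRotated_flatten {m : β} {Bs : List (List β)}
    (hBs : ∀ A ∈ Bs, A.head? = some m ∧ List.IsChain R (A ++ [m])) {u : List β}
    (hu : u ~r Bs.flatten) : List.IsChain R u := by
  rcases eq_or_ne Bs.flatten [] with hnil | hne
  · rw [hnil, List.isRotated_nil_iff] at hu
    rw [hu]
    exact List.isChain_nil
  obtain ⟨r, rfl⟩ := hu.symm
  have hhead : Bs.flatten.head? = some m := by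
    rw [← List.head?_append_of_ne_nil _ hne]
    exact head?_flatten_append fun A hA => (hBs A hA).1
  obtain ⟨hW, -, hlast⟩ := List.isChain_append.1 (isChain_flatten_append hBs)
  refine (hW.append hW (by rw [hhead]; simpa using hlast)).infix
    ⟨Bs.flatten.take (r % Bs.flatten.length), Bs.flatten.drop (r % Bs.flatten.length), ?_⟩
  rw [List.rotate_eq_drop_append_take_mod]
  simp only [List.append_assoc, List.take_append_drop]
  rw [← List.append_assoc, List.take_append_drop]

end Walk

def hsubBlocks : Fin 3 → List (List V) :=
  ![[[(pid,false),(pab,true),(pacb,false),(pac,false),(pabc,true),(pbc,false)]],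
    [[(pid,false),(pab,true),(pabc,true),(pbc,false),(pacb,true),(pac,true)]],
    [[(pid,false),(pab,true),(pacb,false),(pbc,true),(pabc,false),(pac,true)],
     [(pid,false),(pab,true),(pacb,false),(pbc,true),(pabc,false),(pab,false),
      (pabc,false),(pac,true)]]]

lemma mem_hsub {a : Fin 3} {A : List V} : A ∈ hsub a ↔ A ∈ hsubBlocks a := by
  fin_cases a <;> simp [hsub, hsubBlocks]

instance : DecidableRel Arc := fun x y => inferInstanceAs (Decidable ((x, y) ∈ arcs))

theorem hsub_isMarkedCode : IsMarkedCode hsub (pid, false) 4 3 where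
  head?_eq := by simp only [mem_hsub]; decide
  not_mem_tail := by simp only [mem_hsub]; decide
  squareFree a A hA := by
    have key : ∀ a, ∀ A ∈ hsubBlocks a, ∀ i ∈ List.range A.length, ∀ n ∈ List.range A.length,
        0 < n → i + 2 * n ≤ A.length → (A.drop i).take n ≠ (A.drop (i + n)).take n := by
      decide
    exact squareFree_of_forall_take_drop_ne fun i n hn hle =>
      key a A (mem_hsub.1 hA) i (List.mem_range.2 (by omega)) n (List.mem_range.2 (by omega)) hn hle
  injective := by simp only [mem_hsub]; decide
  eq_of_prefix a b A hA B hB u hu hAu hBu := by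
    have key : ∀ a, ∀ A ∈ hsubBlocks a, ∀ b, ∀ B ∈ hsubBlocks b, A.take 4 = B.take 4 → a = b := by
      decide
    exact key a A (mem_hsub.1 hA) b B (mem_hsub.1 hB) (by rw [hAu.take_eq hu, hBu.take_eq hu])
  eq_of_suffix a b A hA B hB u hu hAu hBu := by
    have key : ∀ a, ∀ A ∈ hsubBlocks a, ∀ b, ∀ B ∈ hsubBlocks b,
        A.reverse.take 3 = B.reverse.take 3 → a = b := by
      decide
    exact key a A (mem_hsub.1 hA) b B (mem_hsub.1 hB)
      (by rw [hAu.take_reverse_eq hu, hBu.take_reverse_eq hu])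
  add_le_length := by simp only [mem_hsub]; decide
  length_lt_add := by simp only [mem_hsub]; decide

lemma isChain_hsub_append {a : Fin 3} {A : List V} (hA : A ∈ hsub a) :
    A.head? = some (pid, false) ∧ List.IsChain Arc (A ++ [(pid, false)]) := by
  revert a A
  simp only [mem_hsub]
  decide

theorem h_circular_squarefree_walkable_general (w : List (Fin 3))
    (hsf : CircSquareFree w) (W : List V) (hW : W ∈ SubstSet hsub w) :
    CircSquareFree W ∧ CircWalkable W := by
  obtain ⟨Bs, hBs, rfl⟩ := exists_forall₂_of_mem_substSet hW
  refine ⟨circSquareFree_iff.2 fun r l hl h2l hsq => ?_,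
    fun u hu => isChain_of_isRotated_flatten (m := (pid, false)) (fun A hA => ?_) hu⟩
  · have hw : w ≠ [] := by
      rintro rfl
      cases hBs
      simp at h2l
      omega
    have hf := isParse_flatten hBs hw
    obtain ⟨j, k, hlt, hc⟩ := hf.exists_letter_square_of_square hsub_isMarkedCode
      (factorAt_eq_factorAt_iff.1 hsq) (by norm_num) hl
    have h2k : 2 * (k + 1) ≤ w.length := by
      have hper : cycStart Bs (Bs.length + j) = Bs.flatten.length + cycStart Bs j := by
        simpa using cycStart_length_mul_add Bs 1 j
      have := (hf.strictMono hsub_isMarkedCode).lt_iff_lt.1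
        (show cycStart Bs (j + 2 * k + 1) < cycStart Bs (Bs.length + j) by omega)
      rw [hBs.length_eq]
      omega
    exact circSquareFree_iff.1 hsf j (k + 1) k.succ_pos h2k
      (factorAt_eq_factorAt_iff.2 fun t ht => hc t (by omega))
  · obtain ⟨a, -, ha⟩ := hBs.exists_of_mem_right hA
    exact isChain_hsub_append ha

/-- Lemma 11: if `⟨w⟩` is a square-free circular word of length at least `2` over `{0,1,2}`
and `W ∈ h(w)`, then the circular word `⟨W⟩` is square-free and walkable in `D`. -/
theorem h_circular_squarefree_walkable (w : List (Fin 3)) (hw : 2 ≤ w.length)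
    (hsf : CircSquareFree w) (W : List V) (hW : W ∈ SubstSet hsub w) :
    CircSquareFree W ∧ CircWalkable W :=
  h_circular_squarefree_walkable_general w hsf W hW
end

section
/- For every even positive integer n, there is a square-free circular word of length n over the vertex set of the digraph D that is walkable in D. -/
/-!
A uniform morphism `E` whose images contain a marker word `M` only at block boundaries
(`IsMarkedUniform`) preserves square-freeness once it maps short square-free words to
square-free words. In a long square of `E w` the period copies an occurrence of `M`, so the
period is a multiple of the block length; injectivity of `E` then matches the whole blocks of
the two halves, and `split_unique` matches the two blocks cut by the ends of the first half, which
pulls the square back to `w`.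

The 11-uniform `ternMorph` therefore yields arbitrarily long ternary square-free words, and the
8-uniform `walkMorph`, whose images are walks once around a 6-cycle of `D` with one excursion,
turns them into arbitrarily long square-free walks in `D`. A circular word of even length `n` is
a factor of such a walk closed up by a detour through one, two or three vertices that the walks
never visit. Each detour vertex occurs exactly once in every conjugate, so it lies in no square,
and a square of a conjugate falls inside the factor. The four residues of `n` mod 8 are covered
by four choices of the ends of the factor and of the detour.
-/

open List

section Squares

variable {α : Type*}

def IsSquareAt (w : List α) (p L : ℕ) : Prop :=
  0 < L ∧ p + 2 * L ≤ w.length ∧ ∀ j, p ≤ j → j < p + L → w[j]? = w[j + L]?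

theorem squareFree_iff_forall_not_isSquareAt {w : List α} :
    SquareFree w ↔ ∀ p L, ¬ IsSquareAt w p L := by
  constructor
  · rintro h p L ⟨hL, hlen, hsq⟩
    have hper : ((w.drop p).drop L).take L = (w.drop p).take L := by
      refine ext_getElem? fun i => ?_
      simp only [getElem?_take, getElem?_drop]
      split_ifs with hi
      · rw [hsq (p + i) (by omega) (by omega)]
        congr 1
        omega
      · rfl
    refine h ((w.drop p).take L) (ne_nil_of_length_pos (by simp; omega)) ?_
    have hsq : (w.drop p).take L ++ (w.drop p).take L = (w.drop p).take (L + L) := by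
      rw [take_add, hper]
    rw [hsq]
    exact (take_prefix _ _).isInfix.trans (drop_suffix _ _).isInfix
  · rintro h x hx ⟨s, t, rfl⟩
    refine h s.length x.length ⟨length_pos_iff.mpr hx, by simp; omega, fun j hj₁ hj₂ => ?_⟩
    obtain ⟨i, rfl⟩ : ∃ i, j = s.length + i := ⟨j - s.length, by omega⟩
    grind

theorem SquareFree.infix {u w : List α} (hw : SquareFree w) (hu : u <:+: w) : SquareFree u :=
  fun x hx hxx => hw x hx (hxx.trans hu)

theorem squareFree_iff_forall_mem_tails {w : List α} :
    SquareFree w ↔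
      ∀ s ∈ w.tails, ∀ L ∈ range' 1 (s.length / 2), s.take L ≠ (s.drop L).take L := by
  constructor
  · intro h s hs L hL heq
    rw [mem_range'_1] at hL
    refine h (s.take L) (ne_nil_of_length_pos (by simp; omega)) ?_
    nth_rewrite 2 [heq]
    rw [← take_add]
    exact (take_prefix _ _).isInfix.trans ((mem_tails _ _).mp hs).isInfix
  · intro h x hx hxx
    obtain ⟨s, hxs, hsw⟩ := infix_iff_prefix_suffix.mp hxx
    have hlen := hxs.length_le
    simp only [length_append] at hlen
    refine h s ((mem_tails _ _).mpr hsw) x.length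
      (mem_range'_1.mpr ⟨length_pos_iff.mpr hx, by omega⟩) ?_
    obtain ⟨t, rfl⟩ := hxs
    simp

instance [DecidableEq α] : DecidablePred (SquareFree : List α → Prop) :=
  fun _ => decidable_of_iff _ squareFree_iff_forall_mem_tails.symm

theorem IsSquareAt.take_drop_add {w : List α} {p L b n : ℕ} (h : IsSquareAt w p L) (hb : p ≤ b)
    (hbn : b + n ≤ p + L) : (w.drop (b + L)).take n = (w.drop b).take n := by
  refine ext_getElem? fun i => ?_
  simp only [getElem?_take, getElem?_drop]
  split_ifs with hi
  · rw [h.2.2 (b + i) (by omega) (by omega)]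
    congr 1
    omega
  · rfl

theorem IsSquareAt.take_drop {w : List α} {p L a n : ℕ} (h : IsSquareAt w p L) (ha : a ≤ p)
    (hn : p + 2 * L ≤ a + n) : IsSquareAt ((w.drop a).take n) (p - a) L := by
  refine ⟨h.1, by have := h.2.1; simp; omega, fun j hj₁ hj₂ => ?_⟩
  simp only [getElem?_take, getElem?_drop, if_pos (show j < n by omega),
    if_pos (show j + L < n by omega)]
  rw [h.2.2 (a + j) (by omega) (by omega)]
  congr 1
  omega

end Squares

theorem mem_sections_replicate_finRange {n : ℕ} (x : List (Fin n)) :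
    x ∈ (replicate x.length (finRange n)).sections := by
  rw [mem_sections]
  induction x with
  | nil => exact Forall₂.nil
  | cons a x ih => exact Forall₂.cons (mem_finRange a) ih

section UniformMorphism

variable {α β : Type*} {E : α → List β} {q : ℕ}

theorem length_flatMap_of_uniform (hE : ∀ c, (E c).length = q) (w : List α) :
    (w.flatMap E).length = q * w.length := by
  induction w with
  | nil => simp
  | cons c w ih => simp [ih, hE]; ring

theorem drop_flatMap_of_uniform (hE : ∀ c, (E c).length = q) (w : List α) (i : ℕ) :
    (w.flatMap E).drop (q * i) = (w.drop i).flatMap E := by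
  induction i generalizing w with
  | zero => simp
  | succ i ih =>
    cases w with
    | nil => simp
    | cons c w =>
      rw [flatMap_cons, mul_add_one, add_comm, ← drop_drop, ← hE c, drop_left, hE c, ih,
        drop_succ_cons]

theorem take_flatMap_of_uniform (hE : ∀ c, (E c).length = q) (w : List α) (i : ℕ) :
    (w.flatMap E).take (q * i) = (w.take i).flatMap E := by
  induction i generalizing w with
  | zero => simp
  | succ i ih =>
    cases w with
    | nil => simp
    | cons c w =>
      rw [flatMap_cons, mul_add_one, add_comm, take_add, ← hE c, take_left, hE c,
        drop_left' (hE c), ih, take_succ_cons, flatMap_cons]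

theorem take_drop_flatMap_of_uniform (hE : ∀ c, (E c).length = q) {w : List α} {i r n : ℕ}
    (hi : i < w.length) (hrn : r + n ≤ q) :
    ((w.flatMap E).drop (q * i + r)).take n = ((E w[i]).drop r).take n := by
  rw [← drop_drop, drop_flatMap_of_uniform hE, drop_eq_getElem_cons hi, flatMap_cons,
    drop_append_of_le_length (by rw [hE]; omega),
    take_append_of_le_length (by rw [length_drop, hE]; omega)]

theorem take_drop_mul_flatMap_of_uniform (hE : ∀ c, (E c).length = q) {w : List α} {i n : ℕ}
    (hi : i < w.length) (hn : n ≤ q) : ((w.flatMap E).drop (q * i)).take n = (E w[i]).take n := by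
  simpa using take_drop_flatMap_of_uniform hE hi (r := 0) (n := n) (by omega)

theorem getElem?_flatMap_of_uniform (hE : ∀ c, (E c).length = q) {w : List α} {i u : ℕ}
    (hi : i < w.length) (hu : u < q) : (w.flatMap E)[q * i + u]? = (E w[i])[u]? := by
  have := congrArg (·[0]?) (take_drop_flatMap_of_uniform hE hi (r := u) (n := 1) (by omega))
  simpa only [getElem?_take, getElem?_drop, if_pos Nat.zero_lt_one, add_zero] using this

theorem IsSquareAt.flatMap_window (hE : ∀ c, (E c).length = q) {w : List α} {p L n : ℕ}
    (h : IsSquareAt (w.flatMap E) p L) (hn : p % q + 2 * L ≤ q * n) :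
    IsSquareAt (((w.drop (p / q)).take n).flatMap E) (p % q) L := by
  have hp := Nat.div_add_mod p q
  have := h.take_drop (a := q * (p / q)) (n := q * n) (by omega) (by omega)
  rwa [drop_flatMap_of_uniform hE, take_flatMap_of_uniform hE,
    show p - q * (p / q) = p % q by omega] at this

end UniformMorphism

section MarkedUniform

variable {α β : Type*}

structure IsMarkedUniform (E : α → List β) (q : ℕ) (M : List β) : Prop where
  length_eq : ∀ c, (E c).length = q
  injective : Function.Injective E
  marker_ne_nil : M ≠ []
  marker_prefix : ∀ c, M <+: E c
  marker_sync : ∀ a b, ∀ r < q, 0 < r → ¬ M <+: (E a ++ E b).drop r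
  split_unique : ∀ a b c, ∀ r < q, 0 < r →
    (E a).drop r = (E b).drop r → (E b).take r = (E c).take r → a = b ∨ b = c

namespace IsMarkedUniform

variable {E : α → List β} {q : ℕ} {M : List β}

theorem dvd_of_prefix_drop (hE : IsMarkedUniform E q M) {w : List α} {o : ℕ}
    (ho : M <+: (w.flatMap E).drop o) : q ∣ o := by
  have hM := length_pos_iff.mpr hE.marker_ne_nil
  have hlen := ho.length_le
  rw [length_drop, length_flatMap_of_uniform hE.length_eq] at hlen
  have hw : 0 < w.length := Nat.pos_of_ne_zero fun h => by rw [h] at hlen; omega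
  have hMq : M.length ≤ q := hE.length_eq w[0] ▸ (hE.marker_prefix w[0]).length_le
  have hq : 0 < q := by omega
  have hr := Nat.mod_lt o hq
  have hi : o / q + 1 < (w ++ w).length := by
    have : o / q < w.length := Nat.div_lt_of_lt_mul (by omega)
    simp only [length_append]
    omega
  -- doubling `w` guarantees that the block after the one containing position `o` exists
  have hpre : M <+: ((w ++ w).flatMap E).drop o :=
    ho.trans (by rw [flatMap_append]; exact (prefix_append _ _).drop o)
  have hdrop : ((w ++ w).flatMap E).drop o =
      (E (w ++ w)[o / q] ++ E (w ++ w)[o / q + 1]).drop (o % q)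
        ++ ((w ++ w).drop (o / q + 2)).flatMap E := by
    conv_lhs => rw [← Nat.div_add_mod o q]
    rw [← drop_drop, drop_flatMap_of_uniform hE.length_eq,
      drop_eq_getElem_cons (show o / q < (w ++ w).length by omega),
      drop_eq_getElem_cons hi, flatMap_cons, flatMap_cons, ← append_assoc,
      drop_append_of_le_length (by simp [hE.length_eq]; omega)]
  rw [hdrop] at hpre
  by_contra hndvd
  exact hE.marker_sync _ _ (o % q) hr
    (Nat.pos_of_ne_zero fun h => hndvd (Nat.dvd_of_mod_eq_zero h))
    (prefix_of_prefix_length_le hpre (prefix_append _ _) (by simp [hE.length_eq]; omega))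

theorem dvd_of_isSquareAt (hE : IsMarkedUniform E q M) {w : List α} {p L : ℕ}
    (h : IsSquareAt (w.flatMap E) p L) (hL : q + M.length ≤ L) : q ∣ L := by
  have hlen := h.2.1
  rw [length_flatMap_of_uniform hE.length_eq] at hlen
  have hq : 0 < q := Nat.pos_of_ne_zero fun h₀ => by
    rw [h₀, zero_mul] at hlen
    exact absurd h.1 (by omega)
  obtain ⟨k, hk₁, hk₂⟩ : ∃ k, p ≤ q * k ∧ q * k < p + q := by
    refine ⟨(p + q - 1) / q, ?_, ?_⟩ <;>
    · have := Nat.div_add_mod (p + q - 1) q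
      have := Nat.mod_lt (p + q - 1) hq
      omega
  have hkw : k < w.length := Nat.lt_of_mul_lt_mul_left (a := q) (by omega)
  have hmark : M <+: (w.flatMap E).drop (q * k) := by
    rw [drop_flatMap_of_uniform hE.length_eq, drop_eq_getElem_cons hkw, flatMap_cons]
    exact (hE.marker_prefix _).trans (prefix_append _ _)
  have hmark' : M <+: (w.flatMap E).drop (q * k + L) := by
    rw [prefix_iff_eq_take] at hmark ⊢
    rwa [h.take_drop_add hk₁ (by omega)]
  exact (Nat.dvd_add_right (dvd_mul_right q k)).mp (hE.dvd_of_prefix_drop hmark')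

theorem getElem?_eq_of_isSquareAt (hE : IsMarkedUniform E q M) {w : List α} {p t m : ℕ}
    (h : IsSquareAt (w.flatMap E) p (q * t)) (hm₁ : p ≤ q * m)
    (hm₂ : q * m + q ≤ p + q * t) :
    w[m]? = w[m + t]? := by
  have hlen := h.2.1
  rw [length_flatMap_of_uniform hE.length_eq] at hlen
  have hq : 0 < q := Nat.pos_of_ne_zero fun h₀ => by simpa [h₀] using h.1
  have hmt : m + t < w.length := Nat.lt_of_mul_lt_mul_left (a := q) (by rw [mul_add]; omega)
  have hm : m < w.length := by omega
  have hblocks := h.take_drop_add hm₁ hm₂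
  rw [← mul_add, take_drop_mul_flatMap_of_uniform hE.length_eq hmt le_rfl,
    take_drop_mul_flatMap_of_uniform hE.length_eq hm le_rfl,
    take_of_length_le (hE.length_eq _).le, take_of_length_le (hE.length_eq _).le] at hblocks
  rw [getElem?_eq_getElem hm, getElem?_eq_getElem hmt, hE.injective hblocks.symm]

theorem exists_isSquareAt_of_isSquareAt_flatMap (hE : IsMarkedUniform E q M) {w : List α}
    {p t : ℕ} (h : IsSquareAt (w.flatMap E) p (q * t)) : ∃ j, IsSquareAt w j t := by
  have hlen := h.2.1
  rw [length_flatMap_of_uniform hE.length_eq] at hlen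
  have hq : 0 < q := Nat.pos_of_ne_zero fun h₀ => by simpa [h₀] using h.1
  have ht : 0 < t := Nat.pos_of_ne_zero fun h₀ => by simpa [h₀] using h.1
  obtain ⟨i, r, hr, rfl⟩ : ∃ i r, r < q ∧ p = q * i + r :=
    ⟨p / q, p % q, Nat.mod_lt _ hq, (Nat.div_add_mod p q).symm⟩
  have hw : q * (i + 2 * t) + r ≤ q * w.length := by nlinarith
  rcases Nat.eq_zero_or_pos r with rfl | hr₀
  · refine ⟨i, ht, Nat.le_of_mul_le_mul_left (by omega) hq, fun m hm₁ hm₂ => ?_⟩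
    exact hE.getElem?_eq_of_isSquareAt h (by nlinarith) (by nlinarith)
  have hi : i + 2 * t < w.length := Nat.lt_of_mul_lt_mul_left (a := q) (by omega)
  have hqt : q ≤ q * t := Nat.le_mul_of_pos_right q ht
  -- the two blocks cut by the ends of the first half agree with their translates by `q * t`
  have hsuf : (E w[i]).drop r = (E w[i + t]).drop r := by
    have := h.take_drop_add (b := q * i + r) (n := q - r) le_rfl (by omega)
    rw [show q * i + r + q * t = q * (i + t) + r by ring,
      take_drop_flatMap_of_uniform hE.length_eq (by omega) (by omega),
      take_drop_flatMap_of_uniform hE.length_eq (by omega) (by omega)] at this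
    simpa [take_of_length_le, hE.length_eq] using this.symm
  have hpre : (E w[i + t]).take r = (E w[i + 2 * t]).take r := by
    have := h.take_drop_add (b := q * (i + t)) (n := r) (by nlinarith) (by rw [mul_add]; omega)
    rw [show q * (i + t) + q * t = q * (i + 2 * t) by ring,
      take_drop_mul_flatMap_of_uniform hE.length_eq hi hr.le,
      take_drop_mul_flatMap_of_uniform hE.length_eq (by omega) hr.le] at this
    exact this.symm
  rcases hE.split_unique _ _ _ r hr hr₀ hsuf hpre with hab | hbc
  · refine ⟨i, ht, by omega, fun m hm₁ hm₂ => ?_⟩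
    rcases (show m = i ∨ i + 1 ≤ m by omega) with rfl | hm
    · rw [getElem?_eq_getElem (by omega), getElem?_eq_getElem (by omega), hab]
    · exact hE.getElem?_eq_of_isSquareAt h (by nlinarith) (by nlinarith)
  · refine ⟨i + 1, ht, by omega, fun m hm₁ hm₂ => ?_⟩
    rcases (show m = i + t ∨ m + 1 ≤ i + t by omega) with rfl | hm
    · rw [getElem?_eq_getElem (by omega), getElem?_eq_getElem (by omega), hbc]
      congr 2
      ring
    · exact hE.getElem?_eq_of_isSquareAt h (by nlinarith) (by nlinarith)

-- `hN` makes every square with half-length below `q + M.length` fit into `N` consecutive blocks.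
theorem squareFree_flatMap (hE : IsMarkedUniform E q M) {N : ℕ}
    (hN : q - 1 + 2 * (q + M.length - 1) ≤ q * N)
    (hshort : ∀ x : List α, x.length ≤ N → SquareFree x → SquareFree (x.flatMap E))
    {w : List α} (hw : SquareFree w) : SquareFree (w.flatMap E) := by
  have hw' := squareFree_iff_forall_not_isSquareAt.mp hw
  refine squareFree_iff_forall_not_isSquareAt.mpr fun p L h => ?_
  by_cases hL : q + M.length ≤ L
  · obtain ⟨t, rfl⟩ := hE.dvd_of_isSquareAt h hL
    obtain ⟨j, hj⟩ := hE.exists_isSquareAt_of_isSquareAt_flatMap h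
    exact hw' j t hj
  · have hlen := h.2.1
    rw [length_flatMap_of_uniform hE.length_eq] at hlen
    have hq : 0 < q := Nat.pos_of_ne_zero fun h₀ => by
      rw [h₀, zero_mul] at hlen
      exact absurd h.1 (by omega)
    have hx := hshort ((w.drop (p / q)).take N) (length_take_le _ _)
      (hw.infix ((take_prefix _ _).isInfix.trans (drop_suffix _ _).isInfix))
    exact squareFree_iff_forall_not_isSquareAt.mp hx _ _
      (h.flatMap_window hE.length_eq (n := N) (by have := Nat.mod_lt p hq; omega))

end IsMarkedUniform

end MarkedUniform

def ternMorph : Fin 3 → List (Fin 3)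
  | 0 => [0, 1, 2, 0, 2, 1, 2, 0, 1, 0, 2]
  | 1 => [0, 1, 2, 1, 0, 2, 0, 1, 0, 2, 1]
  | 2 => [0, 1, 2, 1, 0, 2, 1, 2, 0, 2, 1]

set_option synthInstance.maxSize 1000 in
theorem isMarkedUniform_ternMorph : IsMarkedUniform ternMorph 11 [0, 1, 2] := by
  constructor <;> decide

theorem squareFree_flatMap_ternMorph_of_length_le (x : List (Fin 3)) (hx : x.length ≤ 4)
    (hsf : SquareFree x) : SquareFree (x.flatMap ternMorph) := by
  have key : ∀ k ≤ 4, ∀ y ∈ (replicate k (finRange 3)).sections,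
      SquareFree y → SquareFree (y.flatMap ternMorph) := by decide
  exact key _ hx x (mem_sections_replicate_finRange x) hsf

theorem SquareFree.flatMap_ternMorph {w : List (Fin 3)} (hw : SquareFree w) :
    SquareFree (w.flatMap ternMorph) :=
  isMarkedUniform_ternMorph.squareFree_flatMap (N := 4) (by norm_num)
    squareFree_flatMap_ternMorph_of_length_le hw

theorem exists_squareFree_ternary (n : ℕ) :
    ∃ w : List (Fin 3), SquareFree (0 :: w) ∧ n ≤ w.length := by
  induction n with
  | zero => exact ⟨[], by decide, le_rfl⟩
  | succ n ih =>
    obtain ⟨w, hw, hn⟩ := ih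
    refine ⟨[1, 2, 0, 2, 1, 2, 0, 1, 0, 2] ++ w.flatMap ternMorph,
      by simpa [ternMorph] using hw.flatMap_ternMorph, ?_⟩
    rw [length_append, length_flatMap_of_uniform isMarkedUniform_ternMorph.length_eq]
    simp only [length_cons, length_nil]
    omega

/- `D` is the union of the 6-cycle `P 0 → P 1 → ⋯ → P 5 → P 0`, the 6-cycle
`Q 5 → Q 4 → ⋯ → Q 0 → Q 5` and the 2-cycles `P i ⇄ Q i`. -/
def P : Fin 6 → V :=
  ![(pid, false), (pab, true), (pacb, false), (pbc, true), (pabc, false), (pac, true)]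

def Q : Fin 6 → V :=
  ![(pbc, false), (pabc, true), (pac, false), (pid, true), (pab, false), (pacb, true)]

instance inst_s11 : DecidableRel Arc := fun x y => inferInstanceAs (Decidable ((x, y) ∈ arcs))

def walkMorph : Fin 3 → List V
  | 0 => [P 0, P 1, P 2, P 3, Q 3, P 3, P 4, P 5]
  | 1 => [P 0, P 1, Q 1, P 1, P 2, P 3, P 4, P 5]
  | 2 => [P 0, P 1, P 2, Q 2, P 2, P 3, P 4, P 5]

set_option synthInstance.maxSize 1000 in
theorem isMarkedUniform_walkMorph : IsMarkedUniform walkMorph 8 [P 0] := by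
  constructor <;> decide

theorem squareFree_flatMap_walkMorph_of_length_le (x : List (Fin 3)) (hx : x.length ≤ 3)
    (hsf : SquareFree x) : SquareFree (x.flatMap walkMorph) := by
  have key : ∀ k ≤ 3, ∀ y ∈ (replicate k (finRange 3)).sections,
      SquareFree y → SquareFree (y.flatMap walkMorph) := by decide
  exact key _ hx x (mem_sections_replicate_finRange x) hsf

theorem SquareFree.flatMap_walkMorph {w : List (Fin 3)} (hw : SquareFree w) :
    SquareFree (w.flatMap walkMorph) :=
  isMarkedUniform_walkMorph.squareFree_flatMap (N := 3) (by norm_num)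
    squareFree_flatMap_walkMorph_of_length_le hw

theorem isChain_flatMap_walkMorph (w : List (Fin 3)) : IsChain Arc (w.flatMap walkMorph) := by
  have hlast : ∀ c, (walkMorph c).getLast? = some (P 5) := by decide
  have hhead : ∀ c, (walkMorph c).head? = some (P 0) := by decide
  induction w with
  | nil => exact .nil
  | cons c w ih =>
    rw [flatMap_cons, isChain_append]
    refine ⟨by revert c; decide, ih, fun x hx y hy => ?_⟩
    rw [hlast, Option.mem_some_iff] at hx
    cases w with
    | nil => simp at hy
    | cons c' w =>
      rw [flatMap_cons, head?_append_of_ne_nil _ (ne_nil_of_mem (mem_of_mem_head? (hhead c'))),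
        hhead, Option.mem_some_iff] at hy
      rw [← hx, ← hy]
      decide

theorem getElem?_flatMap_walkMorph {w : List (Fin 3)} {i u : ℕ} (hi : i < w.length) (hu : u < 8)
    {v : V} (hv : ∀ c, (walkMorph c)[u]? = some v) :
    (w.flatMap walkMorph)[8 * i + u]? = some v := by
  rw [getElem?_flatMap_of_uniform isMarkedUniform_walkMorph.length_eq hi hu, hv]

section Circular

variable {α : Type*}

theorem List.IsRotated.infix_append_self {l l' : List α} (h : l ~r l') : l <:+: l' ++ l' := by
  obtain ⟨n, rfl⟩ := h
  rw [rotate_eq_drop_append_take_mod]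
  refine ⟨drop (n % l.length) l, take (n % l.length) l, ?_⟩
  simp only [append_assoc]
  rw [← append_assoc (take _ l), take_append_drop]

theorem infix_or_infix_of_disjoint_middle {v x m y : List α} (hm : m ≠ [])
    (hd : ∀ a ∈ m, a ∉ v) (h : v <:+: x ++ m ++ y) : v <:+: x ∨ v <:+: y := by
  have common (s : List α) (hs : s ≠ []) (hsm : s ⊆ m) (hsv : s ⊆ v) : False := by
    obtain ⟨a, ha⟩ := exists_mem_of_ne_nil s hs
    exact hd a (hsm ha) (hsv ha)
  rw [append_assoc, infix_append_iff_ne_nil] at h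
  rcases h with h | h | ⟨l₁, l₂, -, hl₂, rfl, -, hpre⟩
  · exact .inl h
  · rw [infix_append_iff_ne_nil] at h
    rcases h with h | h | ⟨l₁, l₂, hl₁, -, rfl, hsuf, -⟩
    · rcases eq_or_ne v [] with rfl | hv
      · exact .inl nil_infix
      · exact (common v hv h.subset (Subset.refl _)).elim
    · exact .inr h
    · exact (common l₁ hl₁ hsuf.subset (subset_append_left _ _)).elim
  · rcases prefix_or_prefix_of_prefix hpre (prefix_append m y) with h | h
    · exact (common l₂ hl₂ h.subset (subset_append_right _ _)).elim
    · exact (common m hm (Subset.refl _)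
        (Subset.trans h.subset (subset_append_right _ _))).elim

theorem circSquareFree_append [DecidableEq α] {B A : List α} (hB : SquareFree B) (hA : A.Nodup)
    (hA₀ : A ≠ []) (hdisj : ∀ a ∈ A, a ∉ B) : CircSquareFree (B ++ A) := by
  intro u hu x hx hxx
  -- a letter of `A` occurs once in `u`, hence not in the square `x ++ x`
  have hxA : ∀ a ∈ A, a ∉ x ++ x := by
    intro a ha hax
    have hu₁ : count a u = 1 := by
      rw [hu.perm.count_eq, count_append, count_eq_zero_of_not_mem (hdisj a ha),
        count_eq_one_of_mem hA ha]
    have hle := hxx.count_le a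
    have hpos : 0 < count a x := count_pos_iff.mpr (by simpa using hax)
    rw [count_append] at hle
    omega
  have h₁ : x ++ x <:+: B ++ A ++ (B ++ A) := hxx.trans hu.infix_append_self
  rcases infix_or_infix_of_disjoint_middle hA₀ hxA h₁ with h | h
  · exact hB x hx h
  rcases infix_or_infix_of_disjoint_middle (y := []) hA₀ hxA (by rwa [append_nil]) with h | h
  · exact hB x hx h
  · exact hx (by simpa using eq_nil_of_infix_nil h)

theorem isChain_append_append_self {R : α → α → Prop} {B A : List α} {x y : α}
    (hB : IsChain R B) (hx : B.getLast? = some x) (hy : B.head? = some y)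
    (hA : IsChain R (x :: A ++ [y])) : IsChain R (B ++ A ++ (B ++ A)) := by
  rw [cons_append, isChain_cons] at hA
  have h₁ : IsChain R (B ++ A ++ [y]) := by
    rw [append_assoc, isChain_append]
    refine ⟨hB, hA.2, fun a ha b hb => ?_⟩
    rw [hx, Option.mem_some_iff] at ha
    exact ha ▸ hA.1 b hb
  obtain ⟨B', rfl⟩ := head?_eq_some_iff.mp hy
  have h₂ : IsChain R ([y] ++ (B' ++ A)) := h₁.infix ⟨[], [y], by simp⟩
  simpa using h₁.append_overlap h₂ (cons_ne_nil y [])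

theorem circWalkable_of_isChain_append_self {w : List V} (h : IsChain Arc (w ++ w)) :
    CircWalkable w :=
  fun _ hu => h.infix hu.infix_append_self

end Circular

def IsDetour (x y : V) (A : List V) : Prop :=
  A ≠ [] ∧ A.Nodup ∧ (∀ a ∈ A, ∀ c, a ∉ walkMorph c) ∧ IsChain Arc (x :: A ++ [y])

instance (x y : V) (A : List V) : Decidable (IsDetour x y A) := by
  unfold IsDetour; infer_instance

theorem exists_circWord_of_isDetour {w : List (Fin 3)} (hw : SquareFree w) {s e : ℕ}
    (hse : s ≤ e) (he : e < 8 * w.length) {x y : V} (hx : (w.flatMap walkMorph)[e]? = some x)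
    (hy : (w.flatMap walkMorph)[s]? = some y) {A : List V} (hA : IsDetour x y A) {n : ℕ}
    (hn : e + 1 - s + A.length = n) :
    ∃ W : List V, W.length = n ∧ CircSquareFree W ∧ CircWalkable W := by
  obtain ⟨hA₀, hAnd, hAout, hAwalk⟩ := hA
  have hlen := length_flatMap_of_uniform isMarkedUniform_walkMorph.length_eq w
  set B := ((w.flatMap walkMorph).take (e + 1)).drop s
  have hB : B <:+: w.flatMap walkMorph := (drop_suffix _ _).isInfix.trans (take_prefix _ _).isInfix
  have hBlen : B.length = e + 1 - s := by
    simp only [B, length_drop, length_take, hlen]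
    omega
  have hBx : B.getLast? = some x := by
    rw [getLast?_eq_getElem?, hBlen, getElem?_drop, getElem?_take, if_pos (by omega),
      show s + (e + 1 - s - 1) = e by omega, hx]
  have hBy : B.head? = some y := by
    rw [head?_drop, getElem?_take, if_pos (by omega), hy]
  refine ⟨B ++ A, by rw [length_append, hBlen, hn],
    circSquareFree_append (hw.flatMap_walkMorph.infix hB) hAnd hA₀ ?_,
    circWalkable_of_isChain_append_self
      (isChain_append_append_self ((isChain_flatMap_walkMorph w).infix hB) hBx hBy hAwalk)⟩
  intro a ha haB
  obtain ⟨c, -, hc⟩ := mem_flatMap.mp (hB.subset haB)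
  exact hAout a ha c hc

/-- Lemma 12: for every even positive integer `n`, there is a square-free circular word of
length `n` over `V(D)` that is walkable in `D`. -/
theorem even_length_walkable (n : ℕ) (hpos : 0 < n) (heven : Even n) :
    ∃ w : List V, w.length = n ∧ CircSquareFree w ∧ CircWalkable w := by
  obtain ⟨k, hk⟩ :
      ∃ k, n = 8 * k + 2 ∨ n = 8 * k + 4 ∨ n = 8 * k + 6 ∨ n = 8 * k + 8 := by
    obtain ⟨m, rfl⟩ := heven
    exact ⟨(m - 1) / 4, by omega⟩
  obtain ⟨w, hw, hlen⟩ := exists_squareFree_ternary (k + 1)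
  replace hlen : k + 2 ≤ (0 :: w).length := Nat.succ_le_succ hlen
  have hP0 : ∀ i ≤ k + 1, ((0 :: w).flatMap walkMorph)[8 * i]? = some (P 0) := fun i hi =>
    getElem?_flatMap_walkMorph (u := 0) (by omega) (by norm_num) (by decide)
  have hP5 : ((0 :: w).flatMap walkMorph)[8 * k + 7]? = some (P 5) :=
    getElem?_flatMap_walkMorph (by omega) (by norm_num) (by decide)
  -- the first block is `walkMorph 0`, the only block that visits `Q 3`
  have hP4 : ((0 :: w).flatMap walkMorph)[6]? = some (P 4) := rfl
  have hQ3 : ((0 :: w).flatMap walkMorph)[4]? = some (Q 3) := rfl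
  rcases hk with rfl | rfl | rfl | rfl
  · exact exists_circWord_of_isDetour hw (s := 0) (by omega) (by omega) (hP0 k (by omega))
      (hP0 0 (by omega)) (A := [Q 0]) (by decide) (by simp)
  · exact exists_circWord_of_isDetour hw (by omega) (by omega) hP5 hP4 (A := [Q 5, Q 4])
      (by decide) (by simp)
  · exact exists_circWord_of_isDetour hw (by omega) (by omega) (hP0 (k + 1) le_rfl) hP4
      (A := [Q 0, Q 5, Q 4]) (by decide) (by simp; omega)
  · exact exists_circWord_of_isDetour hw (by omega) (by omega) (hP0 (k + 1) le_rfl) hQ3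
      (A := [Q 0, Q 5, Q 4]) (by decide) (by simp; omega)
end

section
/- For every integer n ≥ 4, over the alphabet Σ_n = {1, 2, …, n}, the word w_n = 121 u_3 121 u_4 ⋯ 121 u_n 121, where u_k = k 2 k for each 3 ≤ k ≤ n, is irreducibly square-free. -/
/-- `w` is irreducibly square-free: `w` is square-free and the removal of any interior
letter of `w` produces a word containing a square. -/
def IrreduciblySquareFree {α : Type*} (w : List α) : Prop :=
  SquareFree w ∧
    ∀ (x y : List α) (a : α), w = x ++ [a] ++ y → x ≠ [] → y ≠ [] → ¬ SquareFree (x ++ y)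

/-- The word `w_n = 121 u_3 121 u_4 ⋯ 121 u_n 121`, where `u_k = k2k` for `3 ≤ k ≤ n`. -/
def wn (n : ℕ) : List ℕ :=
  [1, 2, 1] ++ (((List.range (n - 2)).map fun i => [i + 3, 2, i + 3, 1, 2, 1]).flatten)

/-!
`wn n` is a prefix of the infinite word `121 323 121 424 121 525 ⋯`, in which a letter `k ≥ 3`
occurs only twice, in one block `k2k`. A square of period `1` or `2` is ruled out by the local
pattern; a square of period `L ≥ 3` has a letter `k ≥ 3` in its first half, which would recur
`L` places later (the one window of length `3` without such a letter is a block `121`, and it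
is followed by `k2k`). Deleting an interior letter of `121` or `k2k` creates a square of period
`1` or `2` around the gap.
-/

section InfiniteWords

variable {α : Type*}

def SquareFreeSeq (f : ℕ → α) : Prop :=
  ∀ s L, 0 < L → ∃ i < L, f (s + i) ≠ f (s + L + i)

theorem squareFree_map_range_iff (f : ℕ → α) (N : ℕ) :
    SquareFree ((List.range N).map f) ↔
      ∀ s L, 0 < L → s + 2 * L ≤ N → ∃ i < L, f (s + i) ≠ f (s + L + i) := by
  have hget : ∀ j < N, ((List.range N).map f)[j]? = some (f j) := fun j hj => by
    simp [List.getElem?_range hj]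
  constructor
  · intro hsf s L hL hsL
    by_contra! hsq
    refine hsf ((List.range L).map (f <| s + ·)) (by simpa using hL.ne') ?_
    refine List.infix_iff_getElem?.2 ⟨s, by simp; omega, fun i hi => ?_⟩
    simp only [List.length_append, List.length_map, List.length_range] at hi
    rw [hget _ (by omega), List.getElem_append]
    split_ifs with hiL
    · simp [add_comm]
    · simp only [List.length_map, List.length_range] at hiL
      simp [hsq (i - L) (by omega), show s + L + (i - L) = i + s by omega]
  · intro hf x hx hinf
    obtain ⟨s, hlen, hx2⟩ := List.infix_iff_getElem?.1 hinf
    simp only [List.length_append, List.length_map, List.length_range] at hlen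
    obtain ⟨i, hi, hne⟩ := hf s x.length (List.length_pos_iff.2 hx) (by omega)
    have h1 := hx2 i (by simp; omega)
    have h2 := hx2 (i + x.length) (by simp; omega)
    rw [hget _ (by omega), List.getElem_append_left hi] at h1
    rw [hget _ (by omega), List.getElem_append_right (by omega)] at h2
    simp only [Nat.add_sub_cancel, Option.some.injEq] at h1 h2
    exact hne (by rw [add_comm s, h1, ← h2]; congr 1; omega)

theorem SquareFreeSeq.squareFree_map_range {f : ℕ → α} (hf : SquareFreeSeq f) (N : ℕ) :
    SquareFree ((List.range N).map f) :=
  (squareFree_map_range_iff f N).2 fun s L hL _ => hf s L hL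

theorem eraseIdx_map_range (f : ℕ → α) {p N : ℕ} (hp : p < N) :
    ((List.range N).map f).eraseIdx p =
      (List.range (N - 1)).map fun j => f (if j < p then j else j + 1) := by
  apply List.ext_getElem?
  intro j
  rw [List.getElem?_eraseIdx]
  by_cases hj : j + 1 < N
  · simp only [List.getElem?_map, List.getElem?_range hj, List.getElem?_range (by omega : j < N),
      List.getElem?_range (by omega : j < N - 1), Option.map_some]
    split_ifs <;> rfl
  · rw [List.getElem?_eq_none (l := (List.range (N - 1)).map _) (by simp; omega)]
    split_ifs <;> exact List.getElem?_eq_none (by simp; omega)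

end InfiniteWords

/-- The `j`-th letter of `121 323 121 424 121 525 ⋯`. -/
def wnLetter (j : ℕ) : ℕ :=
  if j % 6 = 3 ∨ j % 6 = 5 then j / 6 + 3
  else if j % 6 = 1 ∨ j % 6 = 4 then 2 else 1

theorem wn_eq_map_range (n : ℕ) : wn n = (List.range (6 * (n - 2) + 3)).map wnLetter := by
  suffices h : ∀ m, wn (m + 2) = (List.range (6 * m + 3)).map wnLetter by
    simpa [wn] using h (n - 2)
  intro m
  induction m with
  | zero => rfl
  | succ m ih =>
    have hblock : wn (m + 1 + 2) = wn (m + 2) ++ [m + 3, 2, m + 3, 1, 2, 1] := by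
      simp [wn, List.range_succ]
    rw [hblock, ih, show 6 * (m + 1) + 3 = 6 * m + 3 + 6 by ring, List.range_add (n := 6 * m + 3),
      List.map_append, List.map_map]
    congr 1
    simp only [show List.range 6 = [0, 1, 2, 3, 4, 5] from rfl, List.map_cons, List.map_nil,
      Function.comp_apply, List.cons.injEq, and_true]
    refine ⟨?_, ?_, ?_, ?_, ?_, ?_⟩ <;> unfold wnLetter <;> split_ifs <;> omega

theorem wnLetter_ne_succ (j : ℕ) : wnLetter j ≠ wnLetter (j + 1) := by
  unfold wnLetter; split_ifs <;> omega

theorem mod_six_of_wnLetter_eq_add_two {j : ℕ} (h : wnLetter j = wnLetter (j + 2)) :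
    j % 6 = 0 ∨ j % 6 = 3 := by
  unfold wnLetter at h; split_ifs at h <;> omega

theorem le_two_of_wnLetter_eq_add {j L : ℕ} (hj : j % 6 = 3 ∨ j % 6 = 5)
    (h : wnLetter j = wnLetter (j + L)) : L ≤ 2 := by
  unfold wnLetter at h; split_ifs at h <;> omega

theorem wnLetter_squareFreeSeq : SquareFreeSeq wnLetter := by
  intro s L hL
  by_contra! hsq
  rcases (by omega : L = 1 ∨ L = 2 ∨ 3 ≤ L) with rfl | rfl | hL3
  · exact wnLetter_ne_succ s (hsq 0 one_pos)
  · have h0 := mod_six_of_wnLetter_eq_add_two (hsq 0 two_pos)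
    have h1 := mod_six_of_wnLetter_eq_add_two (j := s + 1) (hsq 1 one_lt_two)
    omega
  · by_cases h121 : s % 6 = 0 ∧ L = 3
    · have h0 := hsq 0 (by omega)
      unfold wnLetter at h0; split_ifs at h0 <;> omega
    · obtain ⟨i, hi, hbig⟩ : ∃ i < L, (s + i) % 6 = 3 ∨ (s + i) % 6 = 5 := by
        refine ⟨if s % 6 = 0 then 3 else if s % 6 ≤ 3 then 3 - s % 6 else 5 - s % 6, ?_, ?_⟩ <;>
          split_ifs <;> omega
      have := le_two_of_wnLetter_eq_add (L := L) hbig (by rw [hsq i hi]; congr 1; omega)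
      omega

theorem not_squareFree_eraseIdx_map_wnLetter {N p : ℕ} (hN : N % 3 = 0) (hp : 0 < p)
    (hpN : p + 2 ≤ N) : ¬ SquareFree (((List.range N).map wnLetter).eraseIdx p) := by
  rw [eraseIdx_map_range _ (by omega), squareFree_map_range_iff]
  push Not
  -- `p % 3` is the position of the deleted letter in its block `121` or `k2k`; the gap then
  -- lies inside a square `k2k2` or `1212`, `11` or `kk`, `2k2k` or `2121`, respectively
  obtain hp3 | hp3 | hp3 : p % 3 = 0 ∨ p % 3 = 1 ∨ p % 3 = 2 := by omega
  · refine ⟨p - 3, 2, two_pos, by omega, fun i hi => ?_⟩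
    interval_cases i <;> unfold wnLetter <;> split_ifs <;> omega
  · refine ⟨p - 1, 1, one_pos, by omega, fun i hi => ?_⟩
    interval_cases i; unfold wnLetter; split_ifs <;> omega
  · refine ⟨p - 1, 2, two_pos, by omega, fun i hi => ?_⟩
    interval_cases i <;> unfold wnLetter <;> split_ifs <;> omega

theorem wn_irreducibly_squarefree_general (n : ℕ) :
    IrreduciblySquareFree (wn n) := by
  rw [wn_eq_map_range]
  refine ⟨wnLetter_squareFreeSeq.squareFree_map_range _, fun x y a hw hx hy => ?_⟩
  have hlen := congrArg List.length hw
  simp only [List.length_append, List.length_map, List.length_range, List.length_singleton]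
    at hlen
  have herase : x ++ y = ((List.range (6 * (n - 2) + 3)).map wnLetter).eraseIdx x.length := by
    rw [hw, List.append_assoc, List.eraseIdx_append_of_length_le le_rfl]
    simp
  rw [herase]
  exact not_squareFree_eraseIdx_map_wnLetter (by omega) (List.length_pos_iff.2 hx)
    (by have := List.length_pos_iff.2 hy; omega)

/-- For every `n ≥ 4`, the word `w_n` is irreducibly square-free. -/
theorem wn_irreducibly_squarefree (n : ℕ) (hn : 4 ≤ n) :
    IrreduciblySquareFree (wn n) :=
  wn_irreducibly_squarefree_general n
end

section
/- For every integer n ≥ 470, there exist nonnegative integers a, b, c, d such that 41a + 52b + 61c + 64d = n and the sum a + b + c + d is even. -/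
/-!
Writing `R` for the set of values `41a + 52b + 61c + 64d` with `a + b + c + d` even, `R` is closed
under addition and contains `82 = 41 + 41`. Hence it suffices to check the `82` values
`470, …, 551`, which a finite search does (for given `a, b, c`, the value of `d` is forced).
-/

def EvenStampSum (n : ℕ) : Prop :=
  ∃ a b c d : ℕ, 41 * a + 52 * b + 61 * c + 64 * d = n ∧ Even (a + b + c + d)

namespace EvenStampSum

theorem add {m n : ℕ} (hm : EvenStampSum m) (hn : EvenStampSum n) : EvenStampSum (m + n) := by
  obtain ⟨a, b, c, d, rfl, hm⟩ := hm
  obtain ⟨a', b', c', d', rfl, hn⟩ := hn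
  refine ⟨a + a', b + b', c + c', d + d', by ring, ?_⟩
  have hsum : a + a' + (b + b') + (c + c') + (d + d') = a + b + c + d + (a' + b' + c' + d') := by
    ring
  exact hsum ▸ hm.add hn

theorem eighty_two : EvenStampSum 82 :=
  ⟨2, 0, 0, 0, rfl, even_two⟩

theorem of_le_of_dvd {n a b c : ℕ} (hle : 41 * a + 52 * b + 61 * c ≤ n)
    (hdvd : 64 ∣ n - (41 * a + 52 * b + 61 * c))
    (heven : Even (a + b + c + (n - (41 * a + 52 * b + 61 * c)) / 64)) : EvenStampSum n :=
  ⟨a, b, c, _, by omega, heven⟩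

theorem of_470_le_of_lt_552 {n : ℕ} (hlo : 470 ≤ n) (hhi : n < 552) : EvenStampSum n := by
  have search : ∀ m < 82, ∃ a < 7, ∃ b < 11, ∃ c < 9,
      41 * a + 52 * b + 61 * c ≤ m + 470 ∧ 64 ∣ m + 470 - (41 * a + 52 * b + 61 * c) ∧
      Even (a + b + c + (m + 470 - (41 * a + 52 * b + 61 * c)) / 64) := by
    decide +kernel
  obtain ⟨a, -, b, -, c, -, hle, hdvd, heven⟩ := search (n - 470) (by omega)
  rw [Nat.sub_add_cancel hlo] at hle hdvd heven
  exact of_le_of_dvd hle hdvd heven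

end EvenStampSum

/-- For every `n ≥ 470`, there are nonnegative integers `a, b, c, d` with
`41a + 52b + 61c + 64d = n` and `a + b + c + d` even. -/
theorem postage_41_52_61_64 (n : ℕ) (hn : 470 ≤ n) :
    ∃ a b c d : ℕ, 41 * a + 52 * b + 61 * c + 64 * d = n ∧ Even (a + b + c + d) := by
  induction n using Nat.strong_induction_on with
  | _ n ih =>
    rcases lt_or_ge n 552 with hlt | hge
    · exact EvenStampSum.of_470_le_of_lt_552 hn hlt
    · have hprev : EvenStampSum (n - 82) := ih (n - 82) (by omega) (by omega)
      have hsum : EvenStampSum (n - 82 + 82) := hprev.add EvenStampSum.eighty_two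
      rwa [Nat.sub_add_cancel (by omega)] at hsum
end
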